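/- arXiv:1401.1860 — 7 statements merged into one kernel-verified Lean document; each statement's English description precedes it below -/
import Mathlib

section
/- Let C > 0, α > 1, and let (μ_k)_{k≥0} be a nonincreasing sequence of reals with 0 ≤ μ_k ≤ C/(k+1) for all k. Then there exists a constant K such that for every integer n ≥ 1: ∑_{k=0}^∞ μ_k^α·(1 − exp(−(n·μ_k)^{−α})) ≤ K·n^{1−α} and ∑_{k=0}^∞ exp(−(n·μ_k)^{−α}) ≤ K·n, where terms with μ_k = 0 are interpreted as 0. -/
/-!
Since `1 - e^{-x} ≤ x`, the `k`-th term of the first series is at most `min (n^{-α}) (μ_k^α)`.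
The first `n` terms therefore contribute at most `n · n^{-α} = n^{1-α}`, and the remaining ones at
most `C^α ∑_{k ≥ n} (k+1)^{-α} ≤ C^α n^{1-α} / (α - 1)` by the integral test.

For the second series, `μ_k ≤ C/(k+1)` gives `(nμ_k)^{-α} ≥ t^α ≥ t - 1` with `t = (k+1)/(nC)`,
so its terms are dominated by the geometric series `e · e^{-(k+1)/(nC)}`, whose sum is at most
`e · nC`.
-/

open Real Finset

lemma sub_one_le_rpow {t α : ℝ} (ht : 0 ≤ t) (hα : 1 ≤ α) : t - 1 ≤ t ^ α := by
  rcases le_total t 1 with h | h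
  · linarith [rpow_nonneg ht α]
  · linarith [self_le_rpow_of_one_le h hα]

lemma tsum_nat_add_succ_rpow_neg_le {α : ℝ} (hα : 1 < α) {N : ℕ} (hN : 0 < N) :
    ∑' k : ℕ, (((k + N : ℕ) : ℝ) + 1) ^ (-α) ≤ (N : ℝ) ^ (1 - α) / (α - 1) := by
  have hN' : (0 : ℝ) < N := by exact_mod_cast hN
  have anti : AntitoneOn (fun x : ℝ => x ^ (-α)) (Set.Ici (N : ℝ)) := fun x hx y _ hxy =>
    rpow_le_rpow_of_nonpos (hN'.trans_le hx) hxy (by linarith)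
  have := anti.tsum_comp_add_le_integral N (integrableOn_Ioi_rpow_of_lt (by linarith) hN')
    fun x hx => rpow_nonneg (hN'.trans hx).le _
  rw [integral_Ioi_rpow_of_lt (by linarith) hN', show -α + 1 = -(α - 1) by ring,
    neg_div_neg_eq, neg_sub] at this
  simpa only [Nat.cast_add, Nat.cast_one] using this

lemma rpow_mul_one_sub_exp_neg_le {a n α : ℝ} (ha : 0 < a) (hn : 0 < n) :
    a ^ α * (1 - exp (-((n * a) ^ (-α)))) ≤ n ^ (-α) :=
  calc a ^ α * (1 - exp (-((n * a) ^ (-α)))) ≤ a ^ α * (n * a) ^ (-α) := by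
        gcongr; linarith [one_sub_le_exp_neg ((n * a) ^ (-α))]
    _ = n ^ (-α) := by
        rw [mul_rpow hn.le ha.le, mul_left_comm, ← rpow_add ha, add_neg_cancel, rpow_zero, mul_one]

lemma rpow_mul_one_sub_exp_neg_mem_Icc {a n α : ℝ} (ha : 0 ≤ a) (hn : 0 ≤ n) :
    a ^ α * (1 - exp (-((n * a) ^ (-α)))) ∈ Set.Icc 0 (a ^ α) :=
  ⟨mul_nonneg (rpow_nonneg ha _)
      (sub_nonneg.2 (exp_le_one_iff.2 (neg_nonpos.2 (rpow_nonneg (mul_nonneg hn ha) _)))),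
    mul_le_of_le_one_right (rpow_nonneg ha _) (sub_le_self _ (exp_pos _).le)⟩

lemma tsum_ite_rpow_mul_one_sub_exp_le {C α : ℝ} (hα : 1 < α) {μ : ℕ → ℝ}
    (h0 : ∀ k, 0 ≤ μ k) (hb : ∀ k, μ k ≤ C / ((k : ℝ) + 1)) {n : ℕ} (hn : 0 < n) :
    (∑' k : ℕ, if μ k = 0 then (0 : ℝ) else
        μ k ^ α * (1 - exp (-(((n : ℝ) * μ k) ^ (-α))))) ≤
      (1 + C ^ α / (α - 1)) * (n : ℝ) ^ (1 - α) := by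
  set f : ℕ → ℝ := fun k => if μ k = 0 then 0 else
    μ k ^ α * (1 - exp (-(((n : ℝ) * μ k) ^ (-α))))
  have hn' : (0 : ℝ) < n := by exact_mod_cast hn
  have hC : 0 ≤ C := by simpa using (h0 0).trans (hb 0)
  have hf_mem : ∀ k, f k ∈ Set.Icc 0 (μ k ^ α) := by
    intro k
    simp only [f]
    split_ifs
    · exact ⟨le_rfl, rpow_nonneg (h0 k) _⟩
    · exact rpow_mul_one_sub_exp_neg_mem_Icc (h0 k) hn'.le
  have hf_le_n : ∀ k, f k ≤ (n : ℝ) ^ (-α) := by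
    intro k
    simp only [f]
    split_ifs with h
    · positivity
    · exact rpow_mul_one_sub_exp_neg_le ((h0 k).lt_of_ne' h) hn'
  have hf_le_k : ∀ k, f k ≤ C ^ α * ((k : ℝ) + 1) ^ (-α) := by
    intro k
    have hk : (0 : ℝ) < k + 1 := by positivity
    calc f k ≤ μ k ^ α := (hf_mem k).2
      _ ≤ (C / ((k : ℝ) + 1)) ^ α := by gcongr; exacts [h0 k, hb k]
      _ = C ^ α * ((k : ℝ) + 1) ^ (-α) := by rw [div_rpow hC hk.le, rpow_neg hk.le, div_eq_mul_inv]
  have hp : Summable fun k : ℕ => ((k : ℝ) + 1) ^ (-α) := by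
    simpa using (summable_nat_add_iff 1).2 (summable_nat_rpow.2 (by linarith : -α < -1))
  have hf : Summable f := .of_nonneg_of_le (fun k => (hf_mem k).1) hf_le_k (hp.mul_left _)
  have hnpow : (n : ℝ) * (n : ℝ) ^ (-α) = (n : ℝ) ^ (1 - α) := by
    rw [sub_eq_add_neg, rpow_add hn', rpow_one]
  calc ∑' k, f k = ∑ k ∈ range n, f k + ∑' k, f (k + n) := (hf.sum_add_tsum_nat_add n).symm
    _ ≤ ∑ _k ∈ range n, (n : ℝ) ^ (-α) + ∑' k, C ^ α * (((k + n : ℕ) : ℝ) + 1) ^ (-α) :=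
        add_le_add (sum_le_sum fun k _ => hf_le_n k)
          (((summable_nat_add_iff n).2 hf).tsum_le_tsum (fun k => hf_le_k (k + n))
            (((summable_nat_add_iff n).2 hp).mul_left _))
    _ ≤ (n : ℝ) * (n : ℝ) ^ (-α) + C ^ α * ((n : ℝ) ^ (1 - α) / (α - 1)) := by
        rw [sum_const, card_range, nsmul_eq_mul, tsum_mul_left]
        gcongr
        exact tsum_nat_add_succ_rpow_neg_le hα hn
    _ = (1 + C ^ α / (α - 1)) * (n : ℝ) ^ (1 - α) := by rw [hnpow]; ring

lemma exp_neg_rpow_le {α C x n : ℝ} {k : ℕ} (hα : 1 ≤ α) (hC : 0 < C) (hn : 0 < n)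
    (hx : 0 < x) (hxk : x ≤ C / ((k : ℝ) + 1)) :
    exp (-((n * x) ^ (-α))) ≤ exp 1 * exp (-(n * C)⁻¹) ^ (k + 1) := by
  set t : ℝ := (n * C / ((k : ℝ) + 1))⁻¹
  have ht : t ≤ (n * x)⁻¹ := by
    refine inv_anti₀ (by positivity) ?_
    rw [mul_div_assoc]
    exact mul_le_mul_of_nonneg_left hxk hn.le
  have key : t - 1 ≤ (n * x) ^ (-α) :=
    calc t - 1 ≤ t ^ α := sub_one_le_rpow (by positivity) hα
      _ ≤ (n * x)⁻¹ ^ α := by gcongr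
      _ = (n * x) ^ (-α) := by rw [inv_rpow (by positivity), rpow_neg (by positivity)]
  have ht_eq : ((k + 1 : ℕ) : ℝ) * -(n * C)⁻¹ = -t := by
    simp only [t, inv_div]; push_cast; ring
  rw [← exp_nat_mul, ← exp_add, exp_le_exp, ht_eq]
  linarith

lemma tsum_exp_neg_pow_succ_le {s : ℝ} (hs : 0 < s) : ∑' k : ℕ, exp (-s) ^ (k + 1) ≤ s⁻¹ := by
  have hr1 : exp (-s) < 1 := exp_lt_one_iff.2 (by linarith)
  simp_rw [pow_succ]
  rw [tsum_mul_right, tsum_geometric_of_lt_one (exp_pos _).le hr1, ← div_eq_inv_mul,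
    div_le_iff₀ (by linarith), le_inv_mul_iff₀ hs]
  have hexp : exp s * exp (-s) = 1 := by rw [← exp_add, add_neg_cancel, exp_zero]
  nlinarith [mul_le_mul_of_nonneg_right (add_one_le_exp s) (exp_pos (-s)).le]

lemma tsum_ite_exp_neg_rpow_le {C α : ℝ} (hC : 0 < C) (hα : 1 ≤ α) {μ : ℕ → ℝ}
    (h0 : ∀ k, 0 ≤ μ k) (hb : ∀ k, μ k ≤ C / ((k : ℝ) + 1)) {n : ℝ} (hn : 0 < n) :
    (∑' k : ℕ, if μ k = 0 then (0 : ℝ) else exp (-((n * μ k) ^ (-α)))) ≤ exp 1 * C * n := by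
  set r := exp (-(n * C)⁻¹)
  have hr1 : r < 1 := exp_lt_one_iff.2 (by simp only [neg_lt_zero]; positivity)
  have hle : ∀ k : ℕ, (if μ k = 0 then (0 : ℝ) else exp (-((n * μ k) ^ (-α)))) ≤
      exp 1 * r ^ (k + 1) := by
    intro k
    split_ifs with h
    · positivity
    · exact exp_neg_rpow_le hα hC hn ((h0 k).lt_of_ne' h) (hb k)
  have hgeom : Summable fun k : ℕ => exp 1 * r ^ (k + 1) :=
    ((summable_nat_add_iff 1).2 (summable_geometric_of_lt_one (exp_pos _).le hr1)).mul_left _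
  have hsum := Summable.of_nonneg_of_le (fun k => by split_ifs <;> positivity) hle hgeom
  calc _ ≤ ∑' k : ℕ, exp 1 * r ^ (k + 1) := hsum.tsum_le_tsum hle hgeom
    _ = exp 1 * ∑' k : ℕ, r ^ (k + 1) := tsum_mul_left
    _ ≤ exp 1 * (n * C) := by
        gcongr; simpa only [inv_inv] using tsum_exp_neg_pow_succ_le (s := (n * C)⁻¹) (by positivity)
    _ = exp 1 * C * n := by ring

theorem stmt3_general (C α : ℝ) (hC : 0 < C) (hα : 1 < α) (μ : ℕ → ℝ)
    (h0 : ∀ k, 0 ≤ μ k) (hb : ∀ k, μ k ≤ C / ((k : ℝ) + 1)) :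
    ∃ K : ℝ, ∀ n : ℕ, 1 ≤ n →
      (∑' k : ℕ, if μ k = 0 then (0 : ℝ) else
          μ k ^ α * (1 - Real.exp (-(((n : ℝ) * μ k) ^ (-α))))) ≤ K * (n : ℝ) ^ (1 - α) ∧
      (∑' k : ℕ, if μ k = 0 then (0 : ℝ) else
          Real.exp (-(((n : ℝ) * μ k) ^ (-α)))) ≤ K * (n : ℝ) := by
  have hA : 0 ≤ 1 + C ^ α / (α - 1) :=
    add_nonneg zero_le_one (div_nonneg (rpow_nonneg hC.le _) (by linarith))
  have hB : 0 ≤ exp 1 * C := by positivity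
  refine ⟨1 + C ^ α / (α - 1) + exp 1 * C, fun n hn => ⟨?_, ?_⟩⟩
  · calc _ ≤ (1 + C ^ α / (α - 1)) * (n : ℝ) ^ (1 - α) :=
          tsum_ite_rpow_mul_one_sub_exp_le hα h0 hb hn
      _ ≤ _ := mul_le_mul_of_nonneg_right (le_add_of_nonneg_right hB) (by positivity)
  · calc _ ≤ exp 1 * C * n := tsum_ite_exp_neg_rpow_le hC hα.le h0 hb (by positivity)
      _ ≤ _ := mul_le_mul_of_nonneg_right (le_add_of_nonneg_left hA) (by positivity)

/-- Let `C > 0`, `α > 1`, and let `(μ_k)` be a nonincreasing sequence of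
reals with `0 ≤ μ_k ≤ C/(k+1)`.  Then there is a constant `K` such that for every `n ≥ 1`,
`∑_k μ_k^α (1 - exp(-(n μ_k)^{-α})) ≤ K n^{1-α}` and `∑_k exp(-(n μ_k)^{-α}) ≤ K n`,
terms with `μ_k = 0` being interpreted as `0`. -/
theorem stmt3 (C α : ℝ) (hC : 0 < C) (hα : 1 < α) (μ : ℕ → ℝ)
    (hmono : ∀ ⦃k l : ℕ⦄, k ≤ l → μ l ≤ μ k)
    (h0 : ∀ k, 0 ≤ μ k) (hb : ∀ k, μ k ≤ C / ((k : ℝ) + 1)) :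
    ∃ K : ℝ, ∀ n : ℕ, 1 ≤ n →
      (∑' k : ℕ, if μ k = 0 then (0 : ℝ) else
          μ k ^ α * (1 - Real.exp (-(((n : ℝ) * μ k) ^ (-α))))) ≤ K * (n : ℝ) ^ (1 - α) ∧
      (∑' k : ℕ, if μ k = 0 then (0 : ℝ) else
          Real.exp (-(((n : ℝ) * μ k) ^ (-α)))) ≤ K * (n : ℝ) :=
  stmt3_general C α hC hα μ h0 hb
end

section
/- Let C, M > 0 and α > 1. Let (μ_k)_{k≥0} be a nonincreasing sequence of reals with 0 ≤ μ_k ≤ C/(k+1), and let (a_k)_{k≥0} be complex numbers with |a_k| ≤ M for all k. Then there exists a constant K such that for every integer n ≥ 1, |∑_{k=0}^∞ μ_k·exp(−(n·μ_k)^{−α})·a_k − ∑_{k : μ_k ≥ 1/n} μ_k·a_k| ≤ K, where terms with μ_k = 0 are interpreted as 0 (both sums converge absolutely). -/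
/-!
Write `φ(x) = exp (-x^{-α})` and `x_k = n μ_k`. The difference of the two sums is
`∑ μ_k (φ(x_k) - 1_{x_k ≥ 1}) a_k`, because monotonicity of `μ` makes `{k | μ_k ≥ 1/n}` an
initial segment of `ℕ`. Since `1 - φ(x) ≤ x^{-α} ≤ 1/x` for `x ≥ 1` and `φ(x) ≤ x^α ≤ x` for
`x < 1`, the `k`-th term is at most `M min(1, x_k)^2 / n ≤ M min(1, nC/(k+1))^2 / n`. Finally
`∑_k min(1, t/(k+1))^2 ≤ 3t`: the first `⌊t⌋` terms are `≤ 1`, the others are `≤ t^2/(k+1)^2`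
and sum to at most `2t`.
-/

open Real Finset

theorem mul_abs_exp_neg_rpow_neg_sub_ite_le {α x : ℝ} (hα : 1 ≤ α) (hx : 0 ≤ x) :
    x * |exp (-x ^ (-α)) - if 1 ≤ x then 1 else 0| ≤ min 1 x ^ 2 := by
  rcases hx.eq_or_lt with rfl | hx
  · simp
  have hy : 0 < x ^ (-α) := rpow_pos_of_pos hx _
  by_cases h1 : 1 ≤ x
  · have hyx : x ^ (-α) ≤ x⁻¹ := by
      simpa [rpow_neg_one] using rpow_le_rpow_of_exponent_le h1 (neg_le_neg hα)
    have hexp : 1 - x ^ (-α) ≤ exp (-x ^ (-α)) := by linarith [add_one_le_exp (-x ^ (-α))]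
    rw [if_pos h1, min_eq_left h1, abs_of_nonpos (by simp [hy.le])]
    calc x * -(exp (-x ^ (-α)) - 1) ≤ x * x⁻¹ := by gcongr; linarith
      _ = 1 ^ 2 := by field_simp
  · rw [not_le] at h1
    -- `y e^{-y} ≤ e^{-1} ≤ 1` for `y = x^{-α}`, so `e^{-y} ≤ x^α ≤ x`
    have hexp : exp (-x ^ (-α)) ≤ x := by
      have h := (mul_exp_neg_le_exp_neg_one (x ^ (-α))).trans (exp_le_one_iff.mpr (by norm_num))
      have hxα : x ^ α ≤ x := by
        simpa using rpow_le_rpow_of_exponent_ge hx h1.le hα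
      rw [rpow_neg hx.le, inv_mul_le_iff₀ (rpow_pos_of_pos hx _), mul_one] at h
      rw [rpow_neg hx.le]
      exact h.trans hxα
    rw [if_neg (not_le.mpr h1), sub_zero, min_eq_right h1.le, abs_of_pos (exp_pos _), sq]
    gcongr

theorem sum_range_min_one_div_sq_le {t : ℝ} (ht : 0 ≤ t) (L : ℕ) :
    ∑ k ∈ range L, min 1 (t / (k + 1)) ^ 2 ≤ 3 * t := by
  set m := ⌊t⌋₊
  calc ∑ k ∈ range L, min 1 (t / (k + 1)) ^ 2
      ≤ ∑ k ∈ range (m + L), min 1 (t / (k + 1)) ^ 2 :=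
        sum_le_sum_of_subset_of_nonneg (range_mono (by omega)) fun _ _ _ => sq_nonneg _
    _ = ∑ k ∈ range m, min 1 (t / (k + 1)) ^ 2 + ∑ k ∈ Ico m (m + L), min 1 (t / (k + 1)) ^ 2 :=
        (sum_range_add_sum_Ico _ (by omega)).symm
    _ ≤ ∑ k ∈ range m, 1 + ∑ k ∈ Ico m (m + L), t ^ 2 * (((k + 1 : ℕ) : ℝ) ^ 2)⁻¹ := by
        gcongr with k _ k _
        · exact pow_le_one₀ (le_min zero_le_one (by positivity)) (min_le_left _ _)
        · calc min 1 (t / (k + 1)) ^ 2 ≤ (t / (k + 1)) ^ 2 :=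
                pow_le_pow_left₀ (le_min zero_le_one (by positivity)) (min_le_right _ _) 2
            _ = t ^ 2 * (((k + 1 : ℕ) : ℝ) ^ 2)⁻¹ := by push_cast; rw [div_pow, div_eq_mul_inv]
    _ ≤ t + 2 * t := by
        have hm : (m : ℝ) ≤ t := Nat.floor_le ht
        have htm : t < m + 1 := Nat.lt_floor_add_one t
        have htail : ∑ k ∈ Ico m (m + L), (((k + 1 : ℕ) : ℝ) ^ 2)⁻¹ ≤ 2 / (m + 1) := by
          rw [sum_Ico_add' (fun i : ℕ => ((i : ℝ) ^ 2)⁻¹), Ico_add_one_left_eq_Ioo]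
          exact sum_Ioo_inv_sq_le _ _
        rw [sum_const, card_range, nsmul_one, ← mul_sum]
        refine add_le_add hm ?_
        calc t ^ 2 * ∑ k ∈ Ico m (m + L), (((k + 1 : ℕ) : ℝ) ^ 2)⁻¹ ≤ t ^ 2 * (2 / (m + 1)) := by
              gcongr
          _ ≤ 2 * t := by
              rw [mul_div_assoc', div_le_iff₀ (by positivity)]
              nlinarith
    _ = 3 * t := by ring

theorem abs_mul_exp_neg_rpow_neg_sub_ite_le {α ν m : ℝ} (hα : 1 ≤ α) (hν : 0 < ν) (hm : 0 ≤ m) :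
    |m * exp (-(ν * m) ^ (-α)) - if 1 / ν ≤ m then m else 0| ≤ min 1 (ν * m) ^ 2 / ν := by
  have hfactor : (m * exp (-(ν * m) ^ (-α)) - if 1 / ν ≤ m then m else 0)
      = m * (exp (-(ν * m) ^ (-α)) - if 1 ≤ ν * m then 1 else 0) := by
    have hiff : 1 / ν ≤ m ↔ 1 ≤ ν * m := by rw [div_le_iff₀ hν, mul_comm]
    simp only [hiff]
    split_ifs <;> ring
  rw [hfactor, abs_mul, abs_of_nonneg hm, le_div_iff₀ hν]
  calc m * _ * ν = ν * m * _ := by ring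
    _ ≤ _ := mul_abs_exp_neg_rpow_neg_sub_ite_le hα (by positivity)

theorem IsLowerSet.eq_Iio_natCard {s : Set ℕ} (hs : IsLowerSet s) (hfin : s.Finite) :
    s = Set.Iio (Nat.card s) := by
  obtain h | ⟨a, rfl⟩ := hs.eq_univ_or_Iio
  · exact absurd (h ▸ hfin) Set.infinite_univ
  · simp

section
variable {μ : ℕ → ℝ} {C ν : ℝ}

theorem finite_setOf_one_div_le (hν : 0 < ν) (hb : ∀ k, μ k ≤ C / ((k : ℝ) + 1)) :
    {k | 1 / ν ≤ μ k}.Finite := by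
  refine (Set.finite_Iic ⌊C * ν⌋₊).subset fun k hk => Nat.le_floor ?_
  have h := (show 1 / ν ≤ μ k from hk).trans (hb k)
  rw [div_le_div_iff₀ hν (by positivity)] at h
  linarith

theorem norm_tsum_sub_tsum_ite_le {α M : ℝ} {a : ℕ → ℂ} (hα : 1 ≤ α) (hν : 0 < ν) (hC : 0 ≤ C)
    (hM : 0 ≤ M) (h0 : ∀ k, 0 ≤ μ k) (hb : ∀ k, μ k ≤ C / ((k : ℝ) + 1)) (ha : ∀ k, ‖a k‖ ≤ M) :
    ‖∑' k, ((μ k * exp (-(ν * μ k) ^ (-α)) : ℝ) : ℂ) * a k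
      - ∑' k, if 1 / ν ≤ μ k then ((μ k : ℝ) : ℂ) * a k else 0‖ ≤ 3 * M * C := by
  set f : ℕ → ℂ := fun k => ((μ k * exp (-(ν * μ k) ^ (-α)) : ℝ) : ℂ) * a k
  set h : ℕ → ℂ := fun k => if 1 / ν ≤ μ k then ((μ k : ℝ) : ℂ) * a k else 0
  set g : ℕ → ℝ := fun k => M / ν * min 1 (ν * C / (k + 1)) ^ 2
  have hbound : ∀ k, ‖f k - h k‖ ≤ g k := by
    intro k
    have hfh : f k - h k
        = ((μ k * exp (-(ν * μ k) ^ (-α)) - if 1 / ν ≤ μ k then μ k else 0 : ℝ) : ℂ) * a k := by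
      simp only [f, h]
      split_ifs <;> push_cast <;> ring
    have hμ : ν * μ k ≤ ν * C / (k + 1) := by
      rw [mul_div_assoc]
      exact mul_le_mul_of_nonneg_left (hb k) hν.le
    rw [hfh, norm_mul, Complex.norm_real, Real.norm_eq_abs]
    calc _ ≤ min 1 (ν * μ k) ^ 2 / ν * M :=
          mul_le_mul (abs_mul_exp_neg_rpow_neg_sub_ite_le hα hν (h0 k)) (ha k) (norm_nonneg _)
            (by positivity)
      _ ≤ min 1 (ν * C / (k + 1)) ^ 2 / ν * M := by
          have := h0 k
          gcongr
      _ = g k := by ring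
  have hpartial : ∀ L, ∑ k ∈ range L, min 1 (ν * C / (k + 1)) ^ 2 ≤ 3 * (ν * C) :=
    sum_range_min_one_div_sq_le (by positivity)
  have hg : Summable g :=
    (summable_of_sum_range_le (fun _ => sq_nonneg _) hpartial).mul_left _
  have hh : Summable h :=
    summable_of_ne_finset_zero (s := (finite_setOf_one_div_le hν hb).toFinset) fun _ hk =>
      if_neg (by simpa using hk)
  have hf : Summable f := by simpa using (hg.of_norm_bounded hbound).add hh
  calc ‖∑' k, f k - ∑' k, h k‖ = ‖∑' k, (f k - h k)‖ := by rw [hf.tsum_sub hh]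
    _ ≤ ∑' k, g k := tsum_of_norm_bounded hg.hasSum hbound
    _ = M / ν * ∑' k : ℕ, min 1 (ν * C / (k + 1)) ^ 2 := tsum_mul_left
    _ ≤ M / ν * (3 * (ν * C)) := by
        gcongr
        exact tsum_le_of_sum_range_le (fun _ => sq_nonneg _) hpartial
    _ = 3 * M * C := by field_simp

end

theorem stmt5_general (C M α : ℝ) (hα : 1 < α)
    (μ : ℕ → ℝ) (a : ℕ → ℂ)
    (hmono : ∀ ⦃k l : ℕ⦄, k ≤ l → μ l ≤ μ k)
    (h0 : ∀ k, 0 ≤ μ k) (hb : ∀ k, μ k ≤ C / ((k : ℝ) + 1))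
    (ha : ∀ k, ‖a k‖ ≤ M) :
    ∃ K : ℝ, ∀ n : ℕ, 1 ≤ n →
      ‖(∑' k : ℕ, if μ k = 0 then (0 : ℂ) else
          ((μ k * Real.exp (-(((n : ℝ) * μ k) ^ (-α))) : ℝ) : ℂ) * a k)
        - ∑ k ∈ Finset.range (Nat.card {k : ℕ | 1 / (n : ℝ) ≤ μ k}), ((μ k : ℝ) : ℂ) * a k‖
        ≤ K := by
  have hM : 0 ≤ M := (norm_nonneg _).trans (ha 0)
  have hC : 0 ≤ C := by simpa using (h0 0).trans (hb 0)
  refine ⟨3 * M * C, fun n hn => ?_⟩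
  have hn0 : (0 : ℝ) < n := by exact_mod_cast hn
  set s := {k : ℕ | 1 / (n : ℝ) ≤ μ k}
  have hs : s = Set.Iio (Nat.card s) :=
    IsLowerSet.eq_Iio_natCard (fun k l hlk hk => hk.trans (hmono hlk))
      (finite_setOf_one_div_le hn0 hb)
  have hmem : ∀ k, k ∈ s ↔ k ∈ range (Nat.card s) := fun k => by
    rw [mem_range, ← Set.mem_Iio, ← hs]
  have hhead : ∑ k ∈ range (Nat.card s), ((μ k : ℝ) : ℂ) * a k
      = ∑' k, if 1 / (n : ℝ) ≤ μ k then ((μ k : ℝ) : ℂ) * a k else 0 := by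
    rw [tsum_eq_sum (s := range (Nat.card s))]
    · exact sum_congr rfl fun k hk => (if_pos ((hmem k).mpr hk)).symm
    · exact fun k hk => if_neg fun hks => hk ((hmem k).mp hks)
  have hzero : ∀ k, (if μ k = 0 then (0 : ℂ) else
      ((μ k * exp (-((n : ℝ) * μ k) ^ (-α)) : ℝ) : ℂ) * a k)
      = ((μ k * exp (-((n : ℝ) * μ k) ^ (-α)) : ℝ) : ℂ) * a k :=
    fun k => ite_eq_right_iff.mpr fun h => by simp [h]
  simp_rw [hzero, hhead]
  exact norm_tsum_sub_tsum_ite_le hα.le hn0 hC hM h0 hb ha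

/-- For a nonincreasing sequence `0 ≤ μ_k ≤ C/(k+1)`, bounded complex
coefficients `|a_k| ≤ M` and `α > 1`, one has
`|∑_k μ_k exp(−(n μ_k)^{−α}) a_k − ∑_{k : μ_k ≥ 1/n} μ_k a_k| = O(1)`,
terms with `μ_k = 0` being interpreted as `0`. -/
theorem stmt5 (C M α : ℝ) (hC : 0 < C) (hM : 0 < M) (hα : 1 < α)
    (μ : ℕ → ℝ) (a : ℕ → ℂ)
    (hmono : ∀ ⦃k l : ℕ⦄, k ≤ l → μ l ≤ μ k)
    (h0 : ∀ k, 0 ≤ μ k) (hb : ∀ k, μ k ≤ C / ((k : ℝ) + 1))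
    (ha : ∀ k, ‖a k‖ ≤ M) :
    ∃ K : ℝ, ∀ n : ℕ, 1 ≤ n →
      ‖(∑' k : ℕ, if μ k = 0 then (0 : ℂ) else
          ((μ k * Real.exp (-(((n : ℝ) * μ k) ^ (-α))) : ℝ) : ℂ) * a k)
        - ∑ k ∈ Finset.range (Nat.card {k : ℕ | 1 / (n : ℝ) ≤ μ k}), ((μ k : ℝ) : ℂ) * a k‖
        ≤ K :=
  stmt5_general C M α hα μ a hmono h0 hb ha
end

section
/- Let ω be a dilation invariant extended limit, let α > 1, let C > 0, and let (μ_k)_{k≥0} be a nonincreasing sequence of nonnegative reals with ∑_{k=0}^n μ_k ≤ C·log(2+n) for all n ≥ 0. Define x_n = ((n+2)·log(n+2))^{-1} · ∑_{k=0}^∞ exp(−((n+2)·μ_k)^{−α}) for n ≥ 0, where terms with μ_k = 0 are interpreted as 0. Then the sequence (x_n) is bounded and ω((x_n)_{n≥0}) = 0. -/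
/-- A bounded real sequence. -/
def BddSeq (x : ℕ → ℝ) : Prop := ∃ M : ℝ, ∀ n, |x n| ≤ M

/-- A dilation invariant extended limit: a positive linear functional on `ℓ∞` extending
the limit functional and invariant under every dilation `σ_m`, `m ≥ 2`. -/
structure ExtLimit (ω : (ℕ → ℝ) → ℝ) : Prop where
  map_add : ∀ x y : ℕ → ℝ, BddSeq x → BddSeq y → ω (x + y) = ω x + ω y
  map_smul : ∀ (c : ℝ) (x : ℕ → ℝ), BddSeq x → ω (c • x) = c * ω x
  pos : ∀ x : ℕ → ℝ, BddSeq x → (∀ n, 0 ≤ x n) → 0 ≤ ω x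
  extends_limit : ∀ (x : ℕ → ℝ) (l : ℝ), Filter.Tendsto x Filter.atTop (nhds l) → ω x = l
  dilation_invariant : ∀ x : ℕ → ℝ, BddSeq x → ∀ m : ℕ, 2 ≤ m → ω (fun j => x (j / m)) = ω x

/-!
Write `f t = exp (-t ^ (-α))`, so that `x n = F (n + 2) / ((n + 2) log (n + 2))` with
`F s = ∑ₖ f (s μₖ)`. Since `f t ≤ 4 (t / (1 + t))²`, `F s` is dominated by
`∑ₖ (s μₖ)² / (1 + s μₖ)`, which is `O(s log s)`: for `k ≤ s²` the terms are at most `s μₖ`, whose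
sum is `O(s log s)` by the Macaev bound, while `(k + 1) μₖ ≤ C log (2 + k)` gives
`μₖ² = O(k^(-3/2))` and a tail of size `O(s)`. This bounds `x`.

Dilation invariance gives `M ω(x) = ω (j ↦ ∑_{i<M} x ⌊j / 2^i⌋)`. For `j ≥ 4^M` the points
`sᵢ = ⌊j / 2^i⌋ + 2` decrease at least geometrically and `log sᵢ ≥ (log s₀) / 2`. Along a
geometric sequence `∑ᵢ tᵢ / (1 + tᵢ)²` telescopes against `t / (1 + t)`, so
`∑ᵢ f (sᵢ μ) / sᵢ ≤ 16 (s₀ μ)² / (1 + s₀ μ) / s₀`, and summing over `k` bounds the dilated sum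
independently of `M`. Hence `ω(x) ≤ O(1 / M)` for every `M`, while `ω(x) ≥ 0` by positivity.
-/

open Finset Filter Topology Real

namespace BddSeq

variable {x y : ℕ → ℝ}

lemma add (hx : BddSeq x) (hy : BddSeq y) : BddSeq (x + y) := by
  obtain ⟨A, hA⟩ := hx
  obtain ⟨B, hB⟩ := hy
  exact ⟨A + B, fun n => (abs_add_le _ _).trans (add_le_add (hA n) (hB n))⟩

lemma sub (hx : BddSeq x) (hy : BddSeq y) : BddSeq (x - y) := by
  obtain ⟨A, hA⟩ := hx
  obtain ⟨B, hB⟩ := hy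
  exact ⟨A + B, fun n => (abs_sub _ _).trans (add_le_add (hA n) (hB n))⟩

lemma of_tendsto {l : ℝ} (h : Tendsto x atTop (𝓝 l)) : BddSeq x := by
  obtain ⟨M, hM⟩ := isBounded_iff_forall_norm_le.mp (Metric.isBounded_range_of_tendsto x h)
  exact ⟨M, fun n => hM _ ⟨n, rfl⟩⟩

lemma comp (hx : BddSeq x) (f : ℕ → ℕ) : BddSeq (fun n => x (f n)) := by
  obtain ⟨A, hA⟩ := hx
  exact ⟨A, fun n => hA _⟩

lemma sum {ι : Type*} {f : ι → ℕ → ℝ} (s : Finset ι) (hf : ∀ i ∈ s, BddSeq (f i)) :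
    BddSeq (∑ i ∈ s, f i) := by
  classical
  induction s using Finset.induction_on with
  | empty => exact ⟨0, fun n => by simp⟩
  | insert i s hi ih =>
    rw [sum_insert hi]
    exact (hf i (mem_insert_self i s)).add (ih fun j hj => hf j (mem_insert_of_mem hj))

end BddSeq

namespace ExtLimit

variable {ω : (ℕ → ℝ) → ℝ} {x y : ℕ → ℝ}

lemma mono (hω : ExtLimit ω) (hx : BddSeq x) (hy : BddSeq y) (h : ∀ n, x n ≤ y n) :
    ω x ≤ ω y := by
  have hyx : 0 ≤ ω (y - x) := hω.pos _ (hy.sub hx) fun n => sub_nonneg.mpr (h n)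
  have := hω.map_add x (y - x) hx (hy.sub hx)
  rw [add_sub_cancel] at this
  linarith

lemma le_of_eventually_le (hω : ExtLimit ω) (hx : BddSeq x) {c : ℝ}
    (h : ∀ᶠ n in atTop, x n ≤ c) : ω x ≤ c := by
  set e : ℕ → ℝ := fun n => max (x n - c) 0
  have he : Tendsto e atTop (𝓝 0) :=
    tendsto_const_nhds.congr' <| h.mono fun n hn => (max_eq_right (sub_nonpos.mpr hn)).symm
  have hc : Tendsto (fun _ : ℕ => c) atTop (𝓝 c) := tendsto_const_nhds
  calc ω x ≤ ω ((fun _ => c) + e) :=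
        hω.mono hx ((BddSeq.of_tendsto hc).add (.of_tendsto he)) fun n => by
          simp only [Pi.add_apply, e]
          linarith [le_max_left (x n - c) 0]
    _ = c := by
        rw [hω.map_add _ _ (.of_tendsto hc) (.of_tendsto he), hω.extends_limit _ _ hc,
          hω.extends_limit _ _ he, add_zero]

lemma map_sum (hω : ExtLimit ω) {ι : Type*} {f : ι → ℕ → ℝ} (s : Finset ι)
    (hf : ∀ i ∈ s, BddSeq (f i)) : ω (∑ i ∈ s, f i) = ∑ i ∈ s, ω (f i) := by
  classical
  induction s using Finset.induction_on with
  | empty => simpa using hω.extends_limit 0 0 tendsto_const_nhds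
  | insert i s hi ih =>
    have hs : ∀ j ∈ s, BddSeq (f j) := fun j hj => hf j (mem_insert_of_mem hj)
    rw [sum_insert hi, sum_insert hi, hω.map_add _ _ (hf i (mem_insert_self i s))
      (BddSeq.sum s hs), ih hs]

lemma map_dilation_pow_two (hω : ExtLimit ω) (hx : BddSeq x) (i : ℕ) :
    ω (fun j => x (j / 2 ^ i)) = ω x := by
  rcases Nat.eq_zero_or_pos i with rfl | hi
  · simp
  · exact hω.dilation_invariant x hx _ (Nat.le_self_pow hi.ne' 2)

lemma map_sum_dilation (hω : ExtLimit ω) (hx : BddSeq x) (M : ℕ) :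
    ω (∑ i ∈ range M, fun j => x (j / 2 ^ i)) = M * ω x := by
  rw [hω.map_sum _ fun i _ => hx.comp _]
  simp [hω.map_dilation_pow_two hx]

end ExtLimit

lemma nonpos_of_forall_nat_mul_le {a b : ℝ} (h : ∀ n : ℕ, n * a ≤ b) : a ≤ 0 := by
  by_contra! ha
  obtain ⟨n, hn⟩ := exists_nat_gt (b / a)
  rw [div_lt_iff₀ ha] at hn
  linarith [h n]

lemma exp_neg_inv_le {t : ℝ} (ht : 0 < t) : exp (-t⁻¹) ≤ 4 * (t / (1 + t)) ^ 2 := by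
  have hu : exp (-(2 * t)⁻¹) ≤ 2 * t / (1 + 2 * t) := by
    calc exp (-(2 * t)⁻¹) = (exp (2 * t)⁻¹)⁻¹ := exp_neg _
      _ ≤ ((2 * t)⁻¹ + 1)⁻¹ := inv_anti₀ (by positivity) (add_one_le_exp _)
      _ = 2 * t / (1 + 2 * t) := by field_simp
  have h2 : 2 * t / (1 + 2 * t) ≤ 2 * (t / (1 + t)) := by
    rw [mul_div_assoc']; gcongr; linarith
  calc exp (-t⁻¹) = exp (-(2 * t)⁻¹) ^ 2 := by rw [← exp_nat_mul]; congr 1; field_simp; ring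
    _ ≤ (2 * (t / (1 + t))) ^ 2 := by gcongr; exact hu.trans h2
    _ = 4 * (t / (1 + t)) ^ 2 := by ring

lemma exp_neg_rpow_neg_le {α t : ℝ} (hα : 1 ≤ α) (ht : 0 < t) :
    exp (-t ^ (-α)) ≤ 4 * (t / (1 + t)) ^ 2 := by
  rcases le_total t 1 with h1 | h1
  · refine le_trans (exp_le_exp.mpr ?_) (exp_neg_inv_le ht)
    have := rpow_le_rpow_of_exponent_ge ht h1 (neg_le_neg hα)
    rw [rpow_neg_one] at this
    linarith
  · have : (1 : ℝ) / 2 ≤ t / (1 + t) := by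
      rw [div_le_div_iff₀ (by norm_num) (by positivity)]; linarith
    calc exp (-t ^ (-α)) ≤ 1 := exp_le_one_iff.mpr (neg_nonpos.mpr (by positivity))
      _ ≤ 4 * (t / (1 + t)) ^ 2 := by nlinarith

lemma log_sq_le_sqrt {y : ℝ} (hy : 1 ≤ y) : log y ^ 2 ≤ 16 * √y := by
  have h := log_le_rpow_div (by linarith : 0 ≤ y) (by norm_num : (0 : ℝ) < 1 / 4)
  have hsq : (y ^ (1 / 4 : ℝ)) ^ 2 = √y := by
    rw [← rpow_natCast, ← rpow_mul (by linarith), sqrt_eq_rpow]; norm_num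
  calc log y ^ 2 ≤ (y ^ (1 / 4 : ℝ) / (1 / 4)) ^ 2 := by gcongr; exact log_nonneg hy
    _ = 16 * √y := by rw [div_pow, hsq]; ring

lemma inv_mul_sqrt_le_sub {x : ℝ} (hx : 0 < x) :
    ((x + 1) * √(x + 1))⁻¹ ≤ 2 * ((√x)⁻¹ - (√(x + 1))⁻¹) := by
  set a := √x
  set b := √(x + 1)
  have ha : 0 < a := sqrt_pos.mpr hx
  have hab : a ≤ b := sqrt_le_sqrt (by linarith)
  have hb : 0 < b := ha.trans_le hab
  have hb3 : (x + 1) * b = b ^ 3 := by rw [pow_succ, sq_sqrt (by linarith)]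
  have hdiff : (b - a) * (b + a) = 1 := by
    linear_combination (sq_sqrt (by linarith : 0 ≤ x + 1)) - sq_sqrt hx.le
  -- `b - a = (b + a)⁻¹`, so the claim is `a b (a + b) ≤ 2 b³`
  have key : a * b * (b + a) ≤ 2 * (b - a) * b ^ 3 * (b + a) := by
    have : 2 * (b - a) * b ^ 3 * (b + a) = 2 * b ^ 3 := by linear_combination 2 * b ^ 3 * hdiff
    rw [this]
    nlinarith [mul_le_mul hab hab ha.le hb.le]
  rw [hb3, inv_sub_inv ha.ne' hb.ne', mul_div_assoc', inv_eq_one_div,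
    div_le_div_iff₀ (by positivity) (by positivity), one_mul]
  exact le_of_mul_le_mul_right key (by positivity)

lemma one_sub_mul_sum_div_one_add_sq_le {r : ℝ} (hr : r ≤ 1) {M : ℕ} {t : ℕ → ℝ}
    (ht : ∀ i, 0 ≤ t i) (hrt : ∀ i < M, t (i + 1) ≤ r * t i) :
    (1 - r) * ∑ i ∈ range M, t i / (1 + t i) ^ 2 ≤ t 0 / (1 + t 0) := by
  have step : ∀ i < M, (1 - r) * (t i / (1 + t i) ^ 2) ≤
      t i / (1 + t i) - t (i + 1) / (1 + t (i + 1)) := by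
    intro i hi
    have hti := ht i
    have hti1 := ht (i + 1)
    have hr' := hrt i hi
    rw [div_sub_div _ _ (by positivity) (by positivity), mul_div_assoc',
      div_le_div_iff₀ (by positivity) (by positivity)]
    nlinarith [mul_nonneg (mul_nonneg hti (sub_nonneg.mpr hr)) (sub_nonneg.mpr
      (hr'.trans (mul_le_of_le_one_left hti hr))), mul_nonneg hti hti1]
  calc (1 - r) * ∑ i ∈ range M, t i / (1 + t i) ^ 2
      ≤ ∑ i ∈ range M, (t i / (1 + t i) - t (i + 1) / (1 + t (i + 1))) := by
        rw [mul_sum]; exact sum_le_sum fun i hi => step i (mem_range.mp hi)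
    _ = t 0 / (1 + t 0) - t M / (1 + t M) := sum_range_sub' _ _
    _ ≤ t 0 / (1 + t 0) := by
        have := ht M
        linarith [show 0 ≤ t M / (1 + t M) by positivity]

noncomputable def heatTerm (α s m : ℝ) : ℝ := if m = 0 then 0 else exp (-(s * m) ^ (-α))

noncomputable def heatTrace (α : ℝ) (μ : ℕ → ℝ) (s : ℝ) : ℝ := ∑' k, heatTerm α s (μ k)

section HeatTerm

variable {α s m : ℝ}

lemma heatTerm_nonneg : 0 ≤ heatTerm α s m := by
  unfold heatTerm; split_ifs <;> positivity

lemma heatTerm_le (hα : 1 ≤ α) (hs : 0 < s) (hm : 0 ≤ m) :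
    heatTerm α s m ≤ 4 * (s * m / (1 + s * m)) ^ 2 := by
  unfold heatTerm
  split_ifs with h0
  · positivity
  · exact exp_neg_rpow_neg_le hα (mul_pos hs (lt_of_le_of_ne hm (Ne.symm h0)))

lemma heatTerm_le_sq_div_one_add (hα : 1 ≤ α) (hs : 0 < s) (hm : 0 ≤ m) :
    heatTerm α s m ≤ 4 * ((s * m) ^ 2 / (1 + s * m)) := by
  have ht : 0 ≤ s * m := mul_nonneg hs.le hm
  refine (heatTerm_le hα hs hm).trans ?_
  rw [div_pow]
  gcongr
  nlinarith

end HeatTerm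

lemma sum_heatTerm_div_le {α m : ℝ} (hα : 1 ≤ α) (hm : 0 ≤ m) {M : ℕ} {s : ℕ → ℝ}
    (hs : ∀ i, 0 < s i) (hrs : ∀ i < M, s (i + 1) ≤ 3 / 4 * s i) :
    ∑ i ∈ range M, heatTerm α (s i) m / s i ≤ 16 * ((s 0 * m) ^ 2 / (1 + s 0 * m)) / s 0 := by
  rcases hm.eq_or_lt with rfl | hm_pos
  · simp [heatTerm]
  have hgeom := one_sub_mul_sum_div_one_add_sq_le (r := 3 / 4) (by norm_num) (M := M)
    (t := fun i => s i * m) (fun i => mul_nonneg (hs i).le hm)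
    (fun i hi => by nlinarith [hrs i hi])
  calc ∑ i ∈ range M, heatTerm α (s i) m / s i
      ≤ ∑ i ∈ range M, 4 * m * (s i * m / (1 + s i * m) ^ 2) :=
        sum_le_sum fun i _ => by
          rw [div_le_iff₀ (hs i)]
          refine (heatTerm_le hα (hs i) hm).trans (le_of_eq ?_)
          field_simp
    _ = 4 * m * ∑ i ∈ range M, s i * m / (1 + s i * m) ^ 2 := by rw [mul_sum]
    _ ≤ 4 * m * (4 * (s 0 * m / (1 + s 0 * m))) := by gcongr; linarith
    _ = 16 * ((s 0 * m) ^ 2 / (1 + s 0 * m)) / s 0 := by field_simp [(hs 0).ne']; norm_num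

noncomputable def normalizedHeatTrace (α : ℝ) (μ : ℕ → ℝ) (n : ℕ) : ℝ :=
  (((n : ℝ) + 2) * log ((n : ℝ) + 2))⁻¹ * heatTrace α μ ((n : ℝ) + 2)

lemma normalizedHeatTrace_nonneg (α : ℝ) (μ : ℕ → ℝ) (n : ℕ) :
    0 ≤ normalizedHeatTrace α μ n := by
  have : 0 < log ((n : ℝ) + 2) := log_pos (by linarith [n.cast_nonneg (α := ℝ)])
  have : 0 ≤ heatTrace α μ ((n : ℝ) + 2) := tsum_nonneg fun _ => heatTerm_nonneg
  unfold normalizedHeatTrace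
  positivity

lemma two_mul_pow_le_div_pow {M i j : ℕ} (hi : i < M) (hj : 4 ^ M ≤ j) :
    2 * 2 ^ i ≤ j / 2 ^ i := by
  rw [Nat.le_div_iff_mul_le (by positivity)]
  calc 2 * 2 ^ i * 2 ^ i = 2 ^ (2 * i + 1) := by ring
    _ ≤ 2 ^ (2 * M) := Nat.pow_le_pow_right two_pos (by omega)
    _ = 4 ^ M := by rw [pow_mul]; norm_num
    _ ≤ j := hj

lemma div_pow_succ_add_two_le {M i j : ℕ} (hi : i < M) (hj : 4 ^ M ≤ j) :
    ((j / 2 ^ (i + 1) : ℕ) : ℝ) + 2 ≤ 3 / 4 * (((j / 2 ^ i : ℕ) : ℝ) + 2) := by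
  have hn : (2 : ℝ) ≤ (j / 2 ^ i : ℕ) := by
    exact_mod_cast (Nat.le_mul_of_pos_right 2 (by positivity)).trans
      (two_mul_pow_le_div_pow hi hj)
  have hhalf : ((j / 2 ^ i / 2 : ℕ) : ℝ) ≤ (j / 2 ^ i : ℕ) / 2 := Nat.cast_div_le
  rw [pow_succ, ← Nat.div_div_eq_div_mul]
  linarith

lemma add_two_le_sq_div_pow_add_two {M i j : ℕ} (hi : i < M) (hj : 4 ^ M ≤ j) :
    j + 2 ≤ (j / 2 ^ i + 2) ^ 2 := by
  have hn := two_mul_pow_le_div_pow hi hj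
  have hlt := Nat.lt_div_mul_add (a := j) (pow_pos two_pos i)
  generalize j / 2 ^ i = n at hn hlt
  generalize 2 ^ i = p at hn hlt
  nlinarith [Nat.mul_le_mul_left (n + 1) (show p ≤ n by omega)]

structure MacaevDixmierBound (μ : ℕ → ℝ) (C : ℝ) : Prop where
  antitone : Antitone μ
  nonneg : ∀ k, 0 ≤ μ k
  sum_range_succ_le : ∀ n : ℕ, ∑ k ∈ range (n + 1), μ k ≤ C * log (2 + n)

namespace MacaevDixmierBound

variable {μ : ℕ → ℝ} {C α : ℝ}

lemma const_nonneg (h : MacaevDixmierBound μ C) : 0 ≤ C := by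
  have h0 := h.sum_range_succ_le 0
  simp only [zero_add, range_one, sum_singleton, Nat.cast_zero, add_zero] at h0
  exact nonneg_of_mul_nonneg_left ((h.nonneg 0).trans h0) (log_pos one_lt_two)

lemma succ_mul_le (h : MacaevDixmierBound μ C) (k : ℕ) : (k + 1) * μ k ≤ C * log (2 + k) := by
  calc (k + 1) * μ k = ∑ _i ∈ range (k + 1), μ k := by simp
    _ ≤ ∑ i ∈ range (k + 1), μ i :=
        sum_le_sum fun i hi => h.antitone (Nat.lt_succ_iff.mp (mem_range.mp hi))
    _ ≤ C * log (2 + k) := h.sum_range_succ_le k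

lemma sq_le (h : MacaevDixmierBound μ C) (k : ℕ) :
    μ k ^ 2 ≤ 32 * C ^ 2 * (((k : ℝ) + 1) * √((k : ℝ) + 1))⁻¹ := by
  have hk : (0 : ℝ) < k + 1 := by positivity
  have hlog : log (2 + k) ^ 2 ≤ 32 * √((k : ℝ) + 1) := by
    have h2 : √(2 + (k : ℝ)) ≤ 2 * √((k : ℝ) + 1) :=
      (sqrt_le_left (by positivity)).mpr (by rw [mul_pow, sq_sqrt hk.le]; linarith)
    linarith [log_sq_le_sqrt (by linarith : (1 : ℝ) ≤ 2 + k)]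
  have hmul : ((k + 1) * μ k) ^ 2 ≤ C ^ 2 * (32 * √((k : ℝ) + 1)) := by
    calc ((k + 1) * μ k) ^ 2 ≤ (C * log (2 + k)) ^ 2 :=
          pow_le_pow_left₀ (mul_nonneg hk.le (h.nonneg k)) (h.succ_mul_le k) 2
      _ = C ^ 2 * log (2 + k) ^ 2 := by ring
      _ ≤ C ^ 2 * (32 * √((k : ℝ) + 1)) := by gcongr
  have hs : 0 < √((k : ℝ) + 1) := sqrt_pos.mpr hk
  have hss : √((k : ℝ) + 1) * √((k : ℝ) + 1) = k + 1 := mul_self_sqrt hk.le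
  rw [← div_eq_mul_inv, le_div_iff₀ (by positivity)]
  nlinarith

lemma sq_le_sub (h : MacaevDixmierBound μ C) {k : ℕ} (hk : 0 < k) :
    μ k ^ 2 ≤ 64 * C ^ 2 * ((√k)⁻¹ - (√((k + 1 : ℕ) : ℝ))⁻¹) := by
  calc μ k ^ 2 ≤ 32 * C ^ 2 * (((k : ℝ) + 1) * √((k : ℝ) + 1))⁻¹ := h.sq_le k
    _ ≤ 32 * C ^ 2 * (2 * ((√k)⁻¹ - (√((k : ℝ) + 1))⁻¹)) := by
        gcongr; exact inv_mul_sqrt_le_sub (Nat.cast_pos.mpr hk)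
    _ = 64 * C ^ 2 * ((√k)⁻¹ - (√((k + 1 : ℕ) : ℝ))⁻¹) := by push_cast; ring

lemma sum_range_sq_nat_add_le (h : MacaevDixmierBound μ C) {N : ℕ} (hN : 0 < N) (m : ℕ) :
    ∑ i ∈ range m, μ (i + N) ^ 2 ≤ 64 * C ^ 2 / √N := by
  set g : ℕ → ℝ := fun i => (√((i + N : ℕ) : ℝ))⁻¹
  calc ∑ i ∈ range m, μ (i + N) ^ 2 ≤ ∑ i ∈ range m, 64 * C ^ 2 * (g i - g (i + 1)) :=
        sum_le_sum fun i _ => by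
          simpa only [g, Nat.add_right_comm i 1 N] using h.sq_le_sub (k := i + N) (by omega)
    _ = 64 * C ^ 2 * (g 0 - g m) := by rw [← mul_sum, sum_range_sub']
    _ ≤ 64 * C ^ 2 / √N := by
        rw [div_eq_mul_inv]
        gcongr
        simp only [g, zero_add]
        linarith [show 0 ≤ g m by positivity]

lemma summable_sq (h : MacaevDixmierBound μ C) : Summable fun k => μ k ^ 2 :=
  (summable_nat_add_iff 1).mp <|
    summable_of_sum_range_le (fun _ => sq_nonneg _) (h.sum_range_sq_nat_add_le one_pos)

lemma tsum_sq_nat_add_le (h : MacaevDixmierBound μ C) {N : ℕ} (hN : 0 < N) :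
    ∑' k, μ (k + N) ^ 2 ≤ 64 * C ^ 2 / √N :=
  Real.tsum_le_of_sum_range_le (fun _ => sq_nonneg _) (h.sum_range_sq_nat_add_le hN)

lemma summable_sq_div_one_add (h : MacaevDixmierBound μ C) {s : ℝ} (hs : 0 ≤ s) :
    Summable fun k => (s * μ k) ^ 2 / (1 + s * μ k) := by
  refine .of_nonneg_of_le (fun k => ?_) (fun k => ?_) (h.summable_sq.mul_left (s ^ 2))
  · have := mul_nonneg hs (h.nonneg k); positivity
  · rw [← mul_pow]
    exact div_le_self (sq_nonneg _) (le_add_of_nonneg_right (mul_nonneg hs (h.nonneg k)))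

lemma tsum_sq_div_one_add_le (h : MacaevDixmierBound μ C) {s : ℝ} (hs : 2 ≤ s) :
    ∑' k, (s * μ k) ^ 2 / (1 + s * μ k) ≤ (3 * C + 128 * C ^ 2) * (s * log s) := by
  have hs0 : 0 ≤ s := by linarith
  have ht : ∀ k, 0 ≤ s * μ k := fun k => mul_nonneg hs0 (h.nonneg k)
  have hC := h.const_nonneg
  have hlogs : 1 ≤ 2 * log s := by
    linarith [log_le_log two_pos hs, log_two_gt_d9]
  set n := ⌊s ^ 2⌋₊
  have hn : (n : ℝ) ≤ s ^ 2 := Nat.floor_le (by positivity)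
  have hsN : s ≤ √((n + 1 : ℕ) : ℝ) := by
    rw [le_sqrt hs0 (by positivity)]; push_cast; exact (Nat.lt_floor_add_one _).le
  rw [← (h.summable_sq_div_one_add hs0).sum_add_tsum_nat_add (n + 1)]
  have head : ∑ k ∈ range (n + 1), (s * μ k) ^ 2 / (1 + s * μ k) ≤ 3 * C * (s * log s) := by
    have hlog : log (2 + n) ≤ 3 * log s := by
      rw [← log_rpow (by positivity)]
      exact log_le_log (by positivity) (by norm_num; nlinarith)
    calc ∑ k ∈ range (n + 1), (s * μ k) ^ 2 / (1 + s * μ k)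
        ≤ ∑ k ∈ range (n + 1), s * μ k :=
          sum_le_sum fun k _ => by
            rw [div_le_iff₀ (by linarith [ht k])]; nlinarith [ht k]
      _ = s * ∑ k ∈ range (n + 1), μ k := by rw [mul_sum]
      _ ≤ s * (C * (3 * log s)) := by
          gcongr; exact (h.sum_range_succ_le n).trans (by gcongr)
      _ = 3 * C * (s * log s) := by ring
  have tail : ∑' k, (s * μ (k + (n + 1))) ^ 2 / (1 + s * μ (k + (n + 1))) ≤
      128 * C ^ 2 * (s * log s) := by
    calc ∑' k, (s * μ (k + (n + 1))) ^ 2 / (1 + s * μ (k + (n + 1)))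
        ≤ ∑' k, s ^ 2 * μ (k + (n + 1)) ^ 2 := by
          refine Summable.tsum_le_tsum (fun k => ?_)
            ((summable_nat_add_iff _).mpr (h.summable_sq_div_one_add hs0))
            (((summable_nat_add_iff _).mpr h.summable_sq).mul_left _)
          rw [← mul_pow]
          exact div_le_self (sq_nonneg _) (le_add_of_nonneg_right (ht _))
      _ = s ^ 2 * ∑' k, μ (k + (n + 1)) ^ 2 := tsum_mul_left
      _ ≤ s ^ 2 * (64 * C ^ 2 / s) := by
          gcongr
          exact (h.tsum_sq_nat_add_le n.succ_pos).trans
            (div_le_div_of_nonneg_left (by positivity) (by positivity) hsN)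
      _ = 64 * C ^ 2 * s := by field_simp
      _ ≤ 128 * C ^ 2 * (s * log s) := by nlinarith [mul_nonneg (sq_nonneg C) hs0]
  linarith

lemma summable_heatTerm (h : MacaevDixmierBound μ C) (hα : 1 ≤ α) {s : ℝ} (hs : 0 < s) :
    Summable fun k => heatTerm α s (μ k) :=
  .of_nonneg_of_le (fun _ => heatTerm_nonneg)
    (fun k => heatTerm_le_sq_div_one_add hα hs (h.nonneg k))
    ((h.summable_sq_div_one_add hs.le).mul_left 4)

lemma heatTrace_le (h : MacaevDixmierBound μ C) (hα : 1 ≤ α) {s : ℝ} (hs : 2 ≤ s) :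
    heatTrace α μ s ≤ 4 * (3 * C + 128 * C ^ 2) * (s * log s) := by
  have hs0 : 0 < s := by linarith
  calc heatTrace α μ s ≤ ∑' k, 4 * ((s * μ k) ^ 2 / (1 + s * μ k)) :=
        (h.summable_heatTerm hα hs0).tsum_le_tsum
          (fun k => heatTerm_le_sq_div_one_add hα hs0 (h.nonneg k))
          ((h.summable_sq_div_one_add hs0.le).mul_left 4)
    _ = 4 * ∑' k, (s * μ k) ^ 2 / (1 + s * μ k) := tsum_mul_left
    _ ≤ 4 * (3 * C + 128 * C ^ 2) * (s * log s) := by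
        rw [mul_assoc]; gcongr; exact h.tsum_sq_div_one_add_le hs

lemma sum_heatTrace_div_le (h : MacaevDixmierBound μ C) (hα : 1 ≤ α) {M : ℕ} {s : ℕ → ℝ}
    (hs : ∀ i, 0 < s i) (hs0 : 2 ≤ s 0) (hrs : ∀ i < M, s (i + 1) ≤ 3 / 4 * s i) :
    ∑ i ∈ range M, heatTrace α μ (s i) / s i ≤ 16 * (3 * C + 128 * C ^ 2) * log (s 0) := by
  have hsum : ∀ i ∈ range M, Summable fun k => heatTerm α (s i) (μ k) / s i :=
    fun i _ => (h.summable_heatTerm hα (hs i)).div_const _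
  calc ∑ i ∈ range M, heatTrace α μ (s i) / s i
      = ∑' k, ∑ i ∈ range M, heatTerm α (s i) (μ k) / s i := by
        rw [Summable.tsum_finsetSum hsum]
        exact sum_congr rfl fun i _ => tsum_div_const.symm
    _ ≤ ∑' k, 16 * ((s 0 * μ k) ^ 2 / (1 + s 0 * μ k)) / s 0 :=
        (summable_sum hsum).tsum_le_tsum
          (fun k => sum_heatTerm_div_le hα (h.nonneg k) hs hrs)
          (((h.summable_sq_div_one_add (hs 0).le).mul_left 16).div_const _)
    _ = 16 * (∑' k, (s 0 * μ k) ^ 2 / (1 + s 0 * μ k)) / s 0 := by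
        rw [tsum_div_const, tsum_mul_left]
    _ ≤ 16 * ((3 * C + 128 * C ^ 2) * (s 0 * log (s 0))) / s 0 := by
        gcongr; exact h.tsum_sq_div_one_add_le hs0
    _ = 16 * (3 * C + 128 * C ^ 2) * log (s 0) := by field_simp [(hs 0).ne']

lemma normalizedHeatTrace_le (h : MacaevDixmierBound μ C) (hα : 1 ≤ α) (n : ℕ) :
    normalizedHeatTrace α μ n ≤ 4 * (3 * C + 128 * C ^ 2) := by
  have hs : (2 : ℝ) ≤ n + 2 := by linarith [n.cast_nonneg (α := ℝ)]
  have : 0 < ((n : ℝ) + 2) * log ((n : ℝ) + 2) := mul_pos (by linarith) (log_pos (by linarith))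
  rw [normalizedHeatTrace, inv_mul_le_iff₀ this, mul_comm]
  exact h.heatTrace_le hα hs

lemma sum_inv_mul_log_mul_heatTrace_le (h : MacaevDixmierBound μ C) (hα : 1 ≤ α) {M : ℕ}
    {s : ℕ → ℝ} (hs2 : ∀ i, 2 ≤ s i) (hrs : ∀ i < M, s (i + 1) ≤ 3 / 4 * s i)
    (hsq : ∀ i < M, s 0 ≤ s i ^ 2) :
    ∑ i ∈ range M, (s i * log (s i))⁻¹ * heatTrace α μ (s i) ≤ 32 * (3 * C + 128 * C ^ 2) := by
  have hs : ∀ i, 0 < s i := fun i => by linarith [hs2 i]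
  have hlog0 : 0 < log (s 0) := log_pos (by linarith [hs2 0])
  have hterm : ∀ i < M, (s i * log (s i))⁻¹ * heatTrace α μ (s i) ≤
      2 / log (s 0) * (heatTrace α μ (s i) / s i) := by
    intro i hi
    have hli : 0 < log (s i) := log_pos (by linarith [hs2 i])
    have hH : 0 ≤ heatTrace α μ (s i) / s i :=
      div_nonneg (tsum_nonneg fun _ => heatTerm_nonneg) (hs i).le
    have hlog : log (s 0) ≤ 2 * log (s i) := by
      have := log_le_log (hs 0) (hsq i hi)
      rwa [log_pow, Nat.cast_ofNat] at this
    rw [mul_inv, mul_comm (s i)⁻¹, mul_assoc, ← div_eq_inv_mul (heatTrace α μ (s i))]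
    gcongr
    rw [inv_eq_one_div, div_le_div_iff₀ hli hlog0]
    linarith
  calc ∑ i ∈ range M, (s i * log (s i))⁻¹ * heatTrace α μ (s i)
      ≤ ∑ i ∈ range M, 2 / log (s 0) * (heatTrace α μ (s i) / s i) :=
        sum_le_sum fun i hi => hterm i (mem_range.mp hi)
    _ = 2 / log (s 0) * ∑ i ∈ range M, heatTrace α μ (s i) / s i := by rw [mul_sum]
    _ ≤ 2 / log (s 0) * (16 * (3 * C + 128 * C ^ 2) * log (s 0)) := by
        gcongr; exact h.sum_heatTrace_div_le hα hs (hs2 0) hrs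
    _ = 32 * (3 * C + 128 * C ^ 2) := by field_simp; ring

lemma sum_normalizedHeatTrace_div_pow_le (h : MacaevDixmierBound μ C) (hα : 1 ≤ α) {M j : ℕ}
    (hj : 4 ^ M ≤ j) :
    ∑ i ∈ range M, normalizedHeatTrace α μ (j / 2 ^ i) ≤ 32 * (3 * C + 128 * C ^ 2) := by
  refine h.sum_inv_mul_log_mul_heatTrace_le (s := fun i => ((j / 2 ^ i : ℕ) : ℝ) + 2) hα
    (fun i => by simp) (fun i hi => div_pow_succ_add_two_le hi hj) (fun i hi => ?_)
  simpa using (Nat.cast_le (α := ℝ)).mpr (add_two_le_sq_div_pow_add_two hi hj)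

end MacaevDixmierBound

theorem stmt6_general (ω : (ℕ → ℝ) → ℝ) (hω : ExtLimit ω) (α C : ℝ) (hα : 1 < α)
    (μ : ℕ → ℝ) (hmono : ∀ ⦃k l : ℕ⦄, k ≤ l → μ l ≤ μ k) (h0 : ∀ k, 0 ≤ μ k)
    (hM : ∀ n : ℕ, ∑ k ∈ Finset.range (n + 1), μ k ≤ C * Real.log (2 + (n : ℝ))) :
    BddSeq (fun n : ℕ => (((n : ℝ) + 2) * Real.log ((n : ℝ) + 2))⁻¹ *
        ∑' k : ℕ, if μ k = 0 then (0 : ℝ) else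
          Real.exp (-(((((n : ℝ) + 2)) * μ k) ^ (-α)))) ∧
      ω (fun n : ℕ => (((n : ℝ) + 2) * Real.log ((n : ℝ) + 2))⁻¹ *
        ∑' k : ℕ, if μ k = 0 then (0 : ℝ) else
          Real.exp (-(((((n : ℝ) + 2)) * μ k) ^ (-α)))) = 0 := by
  show BddSeq (normalizedHeatTrace α μ) ∧ ω (normalizedHeatTrace α μ) = 0
  have h : MacaevDixmierBound μ C := ⟨hmono, h0, hM⟩
  have hx := normalizedHeatTrace_nonneg α μ
  have hb : BddSeq (normalizedHeatTrace α μ) :=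
    ⟨_, fun n => (abs_of_nonneg (hx n)).trans_le (h.normalizedHeatTrace_le hα.le n)⟩
  refine ⟨hb, le_antisymm ?_ (hω.pos _ hb hx)⟩
  refine nonpos_of_forall_nat_mul_le (b := 32 * (3 * C + 128 * C ^ 2)) fun M => ?_
  rw [← hω.map_sum_dilation hb M]
  refine hω.le_of_eventually_le (BddSeq.sum _ fun i _ => hb.comp _) ?_
  filter_upwards [eventually_ge_atTop (4 ^ M)] with j hj
  simpa only [Finset.sum_apply] using h.sum_normalizedHeatTrace_div_pow_le hα.le hj

/-- If `(μ_k)` is nonincreasing, nonnegative, with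
`∑_{k=0}^n μ_k ≤ C log(2+n)` (i.e. the eigenvalue sequence of a positive operator in
`M_{1,∞}`), then for `α > 1` the sequence
`x_n = ((n+2) log(n+2))⁻¹ ∑_k exp(−((n+2) μ_k)^{−α})` is bounded and `ω(x) = 0` for every
dilation invariant extended limit `ω`. -/
theorem stmt6 (ω : (ℕ → ℝ) → ℝ) (hω : ExtLimit ω) (α C : ℝ) (hα : 1 < α) (hC : 0 < C)
    (μ : ℕ → ℝ) (hmono : ∀ ⦃k l : ℕ⦄, k ≤ l → μ l ≤ μ k) (h0 : ∀ k, 0 ≤ μ k)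
    (hM : ∀ n : ℕ, ∑ k ∈ Finset.range (n + 1), μ k ≤ C * Real.log (2 + (n : ℝ))) :
    BddSeq (fun n : ℕ => (((n : ℝ) + 2) * Real.log ((n : ℝ) + 2))⁻¹ *
        ∑' k : ℕ, if μ k = 0 then (0 : ℝ) else
          Real.exp (-(((((n : ℝ) + 2)) * μ k) ^ (-α)))) ∧
      ω (fun n : ℕ => (((n : ℝ) + 2) * Real.log ((n : ℝ) + 2))⁻¹ *
        ∑' k : ℕ, if μ k = 0 then (0 : ℝ) else
          Real.exp (-(((((n : ℝ) + 2)) * μ k) ^ (-α)))) = 0 :=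
  stmt6_general ω hω α C hα μ hmono h0 hM
end

section
/- Let p ≥ 1 be an integer, let c > 0, and let (d_k)_{k≥0} be a sequence of positive reals with d_k ≥ c·(k+1)^{1/p} for all k. Then there exists a constant K such that for all s ∈ (0,1]: ∑_{k=0}^∞ exp(−(s·d_k)^{p+1}) ≤ K·s^{−p} and ∑_{k=0}^∞ d_k^{−p−1}·(1 − exp(−(s·d_k)^{p+1})) ≤ K·s. -/
/-!
Write `ε = s^(p+1)` and `D_k = d_k^(p+1)`. From `exp (-x) ≤ min 1 x⁻¹` and `1 - exp (-x) ≤ min x 1`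
the first sum is at most `ε⁻¹ ∑ min ε D_k⁻¹` and the second at most `∑ min ε D_k⁻¹`. Since
`D_k⁻¹ ≤ c^-(p+1) (k+1)^-(1+1/p)`, splitting this sum at `M = ⌈s^-p⌉` gives at most `M ε ≤ 2s`
from the head and, by comparison with `∫_M^∞ x^-(1+1/p) dx = p M^(-1/p) ≤ p s`, `O(s)` from the tail.
-/

open Real Finset

lemma sum_Ico_rpow_neg_le {q : ℝ} (hq : 0 < q) {M n : ℕ} (hM : 1 ≤ M) (hMn : M ≤ n) :
    ∑ k ∈ Ico M n, ((k : ℝ) + 1) ^ (-(1 + q)) ≤ (M : ℝ) ^ (-q) / q := by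
  have hM0 : (0 : ℝ) < M := by exact_mod_cast hM
  have hanti : AntitoneOn (fun x : ℝ => x ^ (-(1 + q))) (Set.Icc M n) :=
    (antitoneOn_rpow_Ioi_of_exponent_nonpos (by linarith)).mono fun x hx => hM0.trans_le hx.1
  have hzero : (0 : ℝ) ∉ Set.uIcc (M : ℝ) n := by
    rw [Set.uIcc_of_le (by exact_mod_cast hMn)]
    exact fun h => hM0.not_ge h.1
  have hint := hanti.sum_le_integral_Ico hMn
  rw [integral_rpow (Or.inr ⟨by linarith, hzero⟩)] at hint
  have hn : (0 : ℝ) ≤ (n : ℝ) ^ (-q) := by positivity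
  calc ∑ k ∈ Ico M n, ((k : ℝ) + 1) ^ (-(1 + q))
      ≤ ((n : ℝ) ^ (-(1 + q) + 1) - (M : ℝ) ^ (-(1 + q) + 1)) / (-(1 + q) + 1) := by
        simpa using hint
    _ = ((M : ℝ) ^ (-q) - (n : ℝ) ^ (-q)) / q := by
        rw [show -(1 + q) + 1 = -q by ring, div_neg, ← neg_div, neg_sub]
    _ ≤ (M : ℝ) ^ (-q) / q := by gcongr; linarith

theorem tsum_min_rpow_le {p C s : ℝ} (hp : 0 < p) (hs : 0 < s) (hs1 : s ≤ 1) {a : ℕ → ℝ}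
    (ha0 : ∀ k, 0 ≤ a k) (ha : ∀ k, a k ≤ C * ((k : ℝ) + 1) ^ (-(1 + 1 / p))) :
    Summable (fun k => min (s ^ (p + 1)) (a k)) ∧
      ∑' k, min (s ^ (p + 1)) (a k) ≤ (2 + p * C) * s := by
  have hC : 0 ≤ C := by simpa using (ha0 0).trans (ha 0)
  set M := ⌈s ^ (-p)⌉₊
  have hM : 1 ≤ M := Nat.one_le_iff_ne_zero.2 (Nat.ceil_pos.2 (by positivity)).ne'
  have head : (M : ℝ) * s ^ (p + 1) ≤ 2 * s := by
    have hMle : (M : ℝ) ≤ s ^ (-p) + 1 := (Nat.ceil_lt_add_one (by positivity)).le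
    have hsp : s ^ (p + 1) ≤ s := by
      simpa using rpow_le_rpow_of_exponent_ge hs hs1 (by linarith : (1 : ℝ) ≤ p + 1)
    calc (M : ℝ) * s ^ (p + 1) ≤ (s ^ (-p) + 1) * s ^ (p + 1) := by gcongr
      _ = s + s ^ (p + 1) := by
        rw [add_mul, ← rpow_add hs, one_mul, neg_add_cancel_left, rpow_one]
      _ ≤ 2 * s := by linarith
  have tail : (M : ℝ) ^ (-(1 / p)) / (1 / p) ≤ p * s := by
    have hMs : (M : ℝ) ^ (-(1 / p)) ≤ s := by
      calc (M : ℝ) ^ (-(1 / p)) ≤ (s ^ (-p)) ^ (-(1 / p)) :=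
            rpow_le_rpow_of_nonpos (by positivity) (Nat.le_ceil _) (by simp [hp.le])
        _ = s := by rw [← rpow_mul hs.le, neg_mul_neg, mul_one_div_cancel hp.ne', rpow_one]
    rw [div_div_eq_mul_div, div_one, mul_comm]
    gcongr
  have hnonneg : ∀ k, 0 ≤ min (s ^ (p + 1)) (a k) := fun k => le_min (by positivity) (ha0 k)
  have hpartial : ∀ n, ∑ k ∈ range n, min (s ^ (p + 1)) (a k) ≤ (2 + p * C) * s := by
    intro n
    calc ∑ k ∈ range n, min (s ^ (p + 1)) (a k)
        ≤ ∑ k ∈ range (M + n), min (s ^ (p + 1)) (a k) :=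
          sum_le_sum_of_subset_of_nonneg (range_mono (by omega)) fun k _ _ => hnonneg k
      _ = ∑ k ∈ range M, min (s ^ (p + 1)) (a k) +
            ∑ k ∈ Ico M (M + n), min (s ^ (p + 1)) (a k) :=
          (sum_range_add_sum_Ico _ (by omega)).symm
      _ ≤ ∑ k ∈ range M, s ^ (p + 1) +
            ∑ k ∈ Ico M (M + n), C * ((k : ℝ) + 1) ^ (-(1 + 1 / p)) :=
          add_le_add (sum_le_sum fun _ _ => min_le_left _ _)
            (sum_le_sum fun k _ => (min_le_right _ _).trans (ha k))
      _ ≤ (M : ℝ) * s ^ (p + 1) + C * ((M : ℝ) ^ (-(1 / p)) / (1 / p)) := by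
          rw [sum_const, card_range, nsmul_eq_mul, ← mul_sum]
          gcongr
          exact sum_Ico_rpow_neg_le (by positivity) hM (by omega)
      _ ≤ 2 * s + C * (p * s) := by gcongr
      _ = (2 + p * C) * s := by ring
  exact ⟨summable_of_sum_range_le hnonneg hpartial, Real.tsum_le_of_sum_range_le hnonneg hpartial⟩

lemma inv_rpow_le_of_mul_rpow_le {p c x d : ℝ} (hp : 0 < p) (hc : 0 < c) (hx : 0 < x)
    (h : c * x ^ (1 / p) ≤ d) : (d ^ (p + 1))⁻¹ ≤ (c ^ (p + 1))⁻¹ * x ^ (-(1 + 1 / p)) := by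
  have key : c ^ (p + 1) * x ^ (1 + 1 / p) ≤ d ^ (p + 1) :=
    calc c ^ (p + 1) * x ^ (1 + 1 / p) = (c * x ^ (1 / p)) ^ (p + 1) := by
          rw [mul_rpow hc.le (by positivity), ← rpow_mul hx.le]
          congr 2
          field_simp
      _ ≤ d ^ (p + 1) := rpow_le_rpow (by positivity) h (by linarith)
  rw [rpow_neg hx.le, ← mul_inv]
  exact inv_anti₀ (by positivity) key

lemma exp_neg_mul_le_inv_mul_min {ε D : ℝ} (hε : 0 < ε) (hD : 0 < D) :
    exp (-(ε * D)) ≤ ε⁻¹ * min ε D⁻¹ := by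
  rw [mul_min_of_nonneg _ _ (inv_nonneg.2 hε.le), inv_mul_cancel₀ hε.ne', ← mul_inv]
  refine le_min (exp_le_one_iff.2 (by simp; positivity)) ?_
  rw [exp_neg]
  exact inv_anti₀ (by positivity) ((le_add_of_nonneg_right zero_le_one).trans (add_one_le_exp _))

lemma inv_mul_one_sub_exp_neg_mul_le_min {ε D : ℝ} (hD : 0 < D) :
    D⁻¹ * (1 - exp (-(ε * D))) ≤ min ε D⁻¹ := by
  refine le_min ?_ ?_
  · calc D⁻¹ * (1 - exp (-(ε * D))) ≤ D⁻¹ * (ε * D) := by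
          gcongr; linarith [one_sub_le_exp_neg (ε * D)]
      _ = ε := by field_simp
  · calc D⁻¹ * (1 - exp (-(ε * D))) ≤ D⁻¹ * 1 := by
          gcongr; linarith [exp_pos (-(ε * D))]
      _ = D⁻¹ := mul_one _

section TsumComparison

variable {ε : ℝ} {D : ℕ → ℝ}

lemma tsum_exp_neg_mul_le_inv_mul_tsum_min (hε : 0 < ε) (hD : ∀ k, 0 < D k)
    (hsum : Summable fun k => min ε (D k)⁻¹) :
    ∑' k, exp (-(ε * D k)) ≤ ε⁻¹ * ∑' k, min ε (D k)⁻¹ := by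
  have hterm k : exp (-(ε * D k)) ≤ ε⁻¹ * min ε (D k)⁻¹ := exp_neg_mul_le_inv_mul_min hε (hD k)
  rw [← tsum_mul_left]
  exact Summable.tsum_le_tsum hterm
    ((hsum.mul_left _).of_nonneg_of_le (fun k => (exp_pos _).le) hterm) (hsum.mul_left _)

lemma tsum_inv_mul_one_sub_exp_neg_mul_le_tsum_min (hε : 0 ≤ ε) (hD : ∀ k, 0 < D k)
    (hsum : Summable fun k => min ε (D k)⁻¹) :
    ∑' k, (D k)⁻¹ * (1 - exp (-(ε * D k))) ≤ ∑' k, min ε (D k)⁻¹ := by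
  have hterm k : (D k)⁻¹ * (1 - exp (-(ε * D k))) ≤ min ε (D k)⁻¹ :=
    inv_mul_one_sub_exp_neg_mul_le_min (hD k)
  have hnonneg k : 0 ≤ (D k)⁻¹ * (1 - exp (-(ε * D k))) :=
    mul_nonneg (inv_pos.2 (hD k)).le
      (sub_nonneg.2 (exp_le_one_iff.2 (neg_nonpos.2 (mul_nonneg hε (hD k).le))))
  exact Summable.tsum_le_tsum hterm (hsum.of_nonneg_of_le hnonneg hterm) hsum

end TsumComparison

/-- If `d_k ≥ c (k+1)^{1/p}` (the eigenvalue form of `D^{-p} ∈ L_{1,∞}`),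
then for `f(t) = exp(−|t|^{p+1})` one has `∑_k f(s d_k) = O(s^{-p})` and
`∑_k d_k^{−p−1} (1 − f(s d_k)) = O(s)` uniformly for `s ∈ (0,1]`. -/
theorem stmt8 (p : ℕ) (hp : 1 ≤ p) (c : ℝ) (hc : 0 < c) (d : ℕ → ℝ)
    (hd0 : ∀ k, 0 < d k)
    (hd : ∀ k : ℕ, c * ((k : ℝ) + 1) ^ ((1 : ℝ) / p) ≤ d k) :
    ∃ K : ℝ, ∀ s : ℝ, 0 < s → s ≤ 1 →
      (∑' k : ℕ, Real.exp (-((s * d k) ^ (p + 1)))) ≤ K * s ^ (-(p : ℝ)) ∧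
      (∑' k : ℕ, (d k ^ (p + 1))⁻¹ * (1 - Real.exp (-((s * d k) ^ (p + 1))))) ≤ K * s := by
  have hp0 : (0 : ℝ) < p := by exact_mod_cast hp
  refine ⟨2 + p * (c ^ (p + 1))⁻¹, fun s hs hs1 => ?_⟩
  have hD k : 0 < d k ^ (p + 1) := pow_pos (hd0 k) _
  have hdecay k : (d k ^ (p + 1))⁻¹ ≤ (c ^ (p + 1))⁻¹ * ((k : ℝ) + 1) ^ (-(1 + 1 / (p : ℝ))) := by
    exact_mod_cast inv_rpow_le_of_mul_rpow_le hp0 hc (by positivity) (hd k)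
  obtain ⟨hsum, hbound⟩ :=
    tsum_min_rpow_le hp0 hs hs1 (fun k => (inv_pos.2 (hD k)).le) hdecay
  norm_cast at hsum hbound
  have hpow : (s ^ (p + 1))⁻¹ * s = s ^ (-(p : ℝ)) := by
    rw [← rpow_natCast, ← rpow_neg hs.le, ← rpow_add_one hs.ne']
    push_cast
    ring_nf
  simp_rw [mul_pow]
  constructor
  · calc ∑' k, exp (-(s ^ (p + 1) * d k ^ (p + 1)))
        ≤ (s ^ (p + 1))⁻¹ * ∑' k, min (s ^ (p + 1)) (d k ^ (p + 1))⁻¹ :=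
          tsum_exp_neg_mul_le_inv_mul_tsum_min (by positivity) hD hsum
      _ ≤ (s ^ (p + 1))⁻¹ * ((2 + p * (c ^ (p + 1))⁻¹) * s) := by gcongr
      _ = (2 + p * (c ^ (p + 1))⁻¹) * s ^ (-(p : ℝ)) := by rw [mul_left_comm, hpow]
  · exact (tsum_inv_mul_one_sub_exp_neg_mul_le_tsum_min (by positivity) hD hsum).trans hbound
end

section
/- Let p ≥ 1 be an integer, let C > 0, and let (d_k)_{k≥0} be a nondecreasing sequence of positive reals with ∑_{k=0}^n d_k^{−p} ≤ C·log(2+n) for all n ≥ 0. Then for every ε > 0 there exists a constant K such that for all s ∈ (0,1]: ∑_{k=0}^∞ exp(−(s·d_k)^{p+1}) ≤ K·s^{−p−ε} and ∑_{k=0}^∞ d_k^{−p−1}·(1 − exp(−(s·d_k)^{p+1})) ≤ K·s^{1−ε}. -/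
open Real


lemma expA (x : ℝ) (hx : 0 < x) (m : ℕ) (r : ℝ) (hr0 : 0 ≤ r) (hr : r ≤ m) :
    Real.exp (-(x ^ m)) ≤ x ^ (-r) := by
  rcases le_total x 1 with h1 | h1
  · calc Real.exp (-(x ^ m)) ≤ Real.exp 0 := by
          apply Real.exp_le_exp.2; simp [pow_nonneg hx.le]
    _ = x ^ (0:ℝ) := by rw [Real.exp_zero, Real.rpow_zero]
    _ ≤ x ^ (-r) := Real.rpow_le_rpow_of_exponent_ge hx h1 (by linarith)
  · have hxm : 0 < x ^ m := pow_pos hx m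
    calc Real.exp (-(x ^ m)) = (Real.exp (x ^ m))⁻¹ := by rw [Real.exp_neg]
    _ ≤ (x ^ m)⁻¹ := by
        apply inv_anti₀ hxm
        linarith [Real.add_one_le_exp (x ^ m)]
    _ = x ^ (-(m:ℝ)) := by rw [Real.rpow_neg hx.le, Real.rpow_natCast]
    _ ≤ x ^ (-r) := Real.rpow_le_rpow_of_exponent_le h1 (by linarith)

lemma expB (x : ℝ) (hx : 0 < x) (m : ℕ) (r : ℝ) (hr0 : 0 ≤ r) (hr : r ≤ m) :
    1 - Real.exp (-(x ^ m)) ≤ x ^ r := by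
  rcases le_total x 1 with h1 | h1
  · calc 1 - Real.exp (-(x ^ m)) ≤ x ^ m := by
          linarith [Real.add_one_le_exp (-(x ^ m))]
    _ = x ^ ((m:ℝ)) := (Real.rpow_natCast x m).symm
    _ ≤ x ^ r := Real.rpow_le_rpow_of_exponent_ge hx h1 hr
  · calc 1 - Real.exp (-(x ^ m)) ≤ 1 := by linarith [Real.exp_pos (-(x ^ m))]
    _ ≤ x ^ r := Real.one_le_rpow h1 hr0


lemma keybound (p : ℕ) (C : ℝ) (hC : 0 < C) (d : ℕ → ℝ)
    (hd0 : ∀ k, 0 < d k)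
    (hmono : ∀ ⦃k l : ℕ⦄, k ≤ l → d k ≤ d l)
    (hd : ∀ n : ℕ, ∑ k ∈ Finset.range (n + 1), (d k ^ p)⁻¹ ≤ C * Real.log (2 + (n : ℝ)))
    (δ : ℝ) (hδ0 : 0 < δ) (hδ1 : δ ≤ 1) (k : ℕ) :
    (δ / (3 * C)) * ((k : ℝ) + 1) ^ (1 - δ) ≤ d k ^ p := by
  have hk1 : (0:ℝ) < (k:ℝ) + 1 := by positivity
  have hDp : (0:ℝ) < d k ^ p := pow_pos (hd0 k) p
  -- step 1
  have h1 : ((k:ℝ) + 1) * (d k ^ p)⁻¹ ≤ C * Real.log (2 + (k:ℝ)) := by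
    have := Finset.card_nsmul_le_sum (Finset.range (k+1)) (fun j => (d j ^ p)⁻¹)
      ((d k ^ p)⁻¹) (fun j hj => by
        exact inv_anti₀ (pow_pos (hd0 j) p) <| pow_le_pow_left₀ (hd0 j).le (hmono (Nat.lt_succ_iff.mp (Finset.mem_range.mp hj))) p)
    simp only [Finset.card_range, nsmul_eq_mul] at this
    calc ((k:ℝ) + 1) * (d k ^ p)⁻¹ = ((k+1 : ℕ) : ℝ) * (d k ^ p)⁻¹ := by push_cast; ring
    _ ≤ ∑ j ∈ Finset.range (k+1), (d j ^ p)⁻¹ := this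
    _ ≤ C * Real.log (2 + (k:ℝ)) := hd k
  -- step 2 : log bound
  have h2 : Real.log (2 + (k:ℝ)) ≤ (3 / δ) * ((k:ℝ) + 1) ^ δ := by
    have ht : (0:ℝ) < 2 + (k:ℝ) := by positivity
    have hlog : Real.log (2 + (k:ℝ)) = δ⁻¹ * Real.log ((2 + (k:ℝ)) ^ δ) := by
      rw [Real.log_rpow ht]; field_simp
    have hb : (2 + (k:ℝ)) ^ δ ≤ 3 * ((k:ℝ) + 1) ^ δ := by
      calc (2 + (k:ℝ)) ^ δ ≤ (3 * ((k:ℝ) + 1)) ^ δ :=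
            Real.rpow_le_rpow ht.le (by linarith) hδ0.le
      _ = 3 ^ δ * ((k:ℝ) + 1) ^ δ := Real.mul_rpow (by norm_num) hk1.le
      _ ≤ 3 * ((k:ℝ) + 1) ^ δ := by
            have : (3:ℝ) ^ δ ≤ 3 ^ (1:ℝ) :=
              Real.rpow_le_rpow_of_exponent_le (by norm_num) hδ1
            have h3 : (0:ℝ) ≤ ((k:ℝ) + 1) ^ δ := (Real.rpow_pos_of_pos hk1 δ).le
            nlinarith [Real.rpow_one (3:ℝ)]
    calc Real.log (2 + (k:ℝ)) ≤ δ⁻¹ * (2 + (k:ℝ)) ^ δ := by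
          rw [hlog]
          apply mul_le_mul_of_nonneg_left _ (by positivity)
          linarith [Real.log_le_sub_one_of_pos (Real.rpow_pos_of_pos ht δ)]
    _ ≤ δ⁻¹ * (3 * ((k:ℝ) + 1) ^ δ) := by
          apply mul_le_mul_of_nonneg_left hb (by positivity)
    _ = (3 / δ) * ((k:ℝ) + 1) ^ δ := by ring
  -- combine
  have hkδ : (0:ℝ) < ((k:ℝ) + 1) ^ δ := Real.rpow_pos_of_pos hk1 δ
  have h3 : ((k:ℝ) + 1) ≤ (3 * C / δ) * ((k:ℝ) + 1) ^ δ * d k ^ p := by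
    have := mul_le_mul_of_nonneg_left h2 hC.le
    have h1' : ((k:ℝ) + 1) ≤ C * Real.log (2 + (k:ℝ)) * d k ^ p := by
      have := mul_le_mul_of_nonneg_right h1 hDp.le
      rw [mul_assoc, inv_mul_cancel₀ hDp.ne', mul_one] at this
      exact this
    calc ((k:ℝ) + 1) ≤ C * Real.log (2 + (k:ℝ)) * d k ^ p := h1'
    _ ≤ (C * ((3/δ) * ((k:ℝ)+1) ^ δ)) * d k ^ p := by
          apply mul_le_mul_of_nonneg_right _ hDp.le
          exact mul_le_mul_of_nonneg_left h2 hC.le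
    _ = (3 * C / δ) * ((k:ℝ) + 1) ^ δ * d k ^ p := by ring
  -- divide by (k+1)^δ
  have hsplit : ((k:ℝ) + 1) ^ (1 - δ) = ((k:ℝ) + 1) * (((k:ℝ) + 1) ^ δ)⁻¹ := by
    rw [Real.rpow_sub hk1, Real.rpow_one, div_eq_mul_inv]
  have := mul_le_mul_of_nonneg_left h3 (le_of_lt (by positivity : (0:ℝ) < δ / (3*C) * (((k:ℝ)+1) ^ δ)⁻¹))
  calc (δ / (3 * C)) * ((k : ℝ) + 1) ^ (1 - δ)
      = δ / (3*C) * (((k:ℝ)+1) ^ δ)⁻¹ * ((k:ℝ) + 1) := by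
        rw [hsplit]; ring
  _ ≤ δ / (3*C) * (((k:ℝ)+1) ^ δ)⁻¹ * ((3 * C / δ) * ((k:ℝ) + 1) ^ δ * d k ^ p) := this
  _ = d k ^ p := by field_simp




/-- If `(d_k)` is nondecreasing positive with
`∑_{k=0}^n d_k^{−p} ≤ C log(2+n)` (the eigenvalue form of `D^{-p} ∈ M_{1,∞}`), then for
`f(t) = exp(−|t|^{p+1})` and every `ε > 0` one has `∑_k f(s d_k) = O(s^{−p−ε})` and
`∑_k d_k^{−p−1} (1 − f(s d_k)) = O(s^{1−ε})` uniformly for `s ∈ (0,1]`. -/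
theorem stmt9 (p : ℕ) (hp : 1 ≤ p) (C : ℝ) (hC : 0 < C) (d : ℕ → ℝ)
    (hd0 : ∀ k, 0 < d k)
    (hmono : ∀ ⦃k l : ℕ⦄, k ≤ l → d k ≤ d l)
    (hd : ∀ n : ℕ, ∑ k ∈ Finset.range (n + 1), (d k ^ p)⁻¹ ≤ C * Real.log (2 + (n : ℝ))) :
    ∀ ε : ℝ, 0 < ε → ∃ K : ℝ, ∀ s : ℝ, 0 < s → s ≤ 1 →
      (∑' k : ℕ, Real.exp (-((s * d k) ^ (p + 1)))) ≤ K * s ^ (-(p : ℝ) - ε) ∧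
      (∑' k : ℕ, (d k ^ (p + 1))⁻¹ * (1 - Real.exp (-((s * d k) ^ (p + 1)))))
        ≤ K * s ^ (1 - ε) := by
  intro ε hε
  have hp0 : (0:ℝ) < (p:ℝ) := by exact_mod_cast Nat.lt_of_lt_of_le Nat.zero_lt_one hp
  set ε' := min ε (1/2) with hε'def
  have hε'0 : 0 < ε' := lt_min hε (by norm_num)
  have hε'ε : ε' ≤ ε := min_le_left _ _
  have hε'half : ε' ≤ 1/2 := min_le_right _ _
  set δ := ε' / (2 * ((p:ℝ) + ε')) with hδdef
  have hpε : (0:ℝ) < (p:ℝ) + ε' := by linarith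
  have hδ0 : 0 < δ := by positivity
  have hδ1 : δ ≤ 1 := by
    rw [hδdef, div_le_one (by linarith)]; linarith
  set q := (1 - δ) * (((p:ℝ) + ε') / (p:ℝ)) with hqdef
  have hkey : (1 - δ) * ((p:ℝ) + ε') = (p:ℝ) + ε' / 2 := by
    rw [hδdef]; field_simp; ring
  have hq1 : 1 < q := by
    have hq' : q = ((p:ℝ) + ε'/2) / (p:ℝ) := by
      rw [hqdef, ← hkey]; ring
    rw [hq', lt_div_iff₀ hp0]; linarith
  set c := (δ / (3 * C)) ^ (((p:ℝ) + ε') / (p:ℝ)) with hcdef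
  have hc0 : 0 < c := Real.rpow_pos_of_pos (by positivity) _
  have hdk : ∀ k : ℕ, c * ((k:ℝ) + 1) ^ q ≤ d k ^ ((p:ℝ) + ε') := by
    intro k
    have hb := keybound p C hC d hd0 hmono hd δ hδ0 hδ1 k
    have hk1 : (0:ℝ) < (k:ℝ) + 1 := by positivity
    calc c * ((k:ℝ) + 1) ^ q
        = ((δ / (3 * C)) * ((k:ℝ) + 1) ^ (1 - δ)) ^ (((p:ℝ) + ε') / (p:ℝ)) := by
          rw [Real.mul_rpow (by positivity) (by positivity), hcdef, hqdef,
            Real.rpow_mul hk1.le]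
    _ ≤ (d k ^ p) ^ (((p:ℝ) + ε') / (p:ℝ)) :=
          Real.rpow_le_rpow (by positivity) hb (by positivity)
    _ = d k ^ ((p:ℝ) + ε') := by
          rw [← Real.rpow_natCast (d k) p, ← Real.rpow_mul (hd0 k).le]
          congr 1; field_simp
  have hdkinv : ∀ k : ℕ, d k ^ (-((p:ℝ) + ε')) ≤ c⁻¹ * ((k:ℝ) + 1) ^ (-q) := by
    intro k
    have hk1 : (0:ℝ) < (k:ℝ) + 1 := by positivity
    rw [Real.rpow_neg (hd0 k).le, Real.rpow_neg hk1.le, ← mul_inv]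
    exact inv_anti₀ (by positivity) (hdk k)
  have hsum : Summable (fun k : ℕ => ((k:ℝ) + 1) ^ (-q)) := by
    have h := Real.summable_nat_rpow.mpr (by linarith : -q < -1)
    have h2 := (summable_nat_add_iff 1).mpr h
    exact h2.congr fun n => by push_cast; ring_nf
  set Z := ∑' k : ℕ, ((k:ℝ) + 1) ^ (-q) with hZdef
  have hZ0 : 0 ≤ Z := tsum_nonneg fun k => Real.rpow_nonneg (by positivity) _
  refine ⟨c⁻¹ * Z, fun s hs0 hs1 => ?_⟩
  have hsd : ∀ k, 0 < s * d k := fun k => mul_pos hs0 (hd0 k)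
  have hcast : ((p:ℝ) + ε') ≤ ((p + 1 : ℕ) : ℝ) := by push_cast; linarith
  have hbound1 : ∀ k : ℕ, Real.exp (-((s * d k) ^ (p + 1)))
      ≤ s ^ (-((p:ℝ) + ε')) * (c⁻¹ * ((k:ℝ) + 1) ^ (-q)) := by
    intro k
    calc Real.exp (-((s * d k) ^ (p + 1))) ≤ (s * d k) ^ (-((p:ℝ) + ε')) :=
          expA _ (hsd k) (p + 1) _ (by positivity) hcast
    _ = s ^ (-((p:ℝ) + ε')) * d k ^ (-((p:ℝ) + ε')) := Real.mul_rpow hs0.le (hd0 k).le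
    _ ≤ s ^ (-((p:ℝ) + ε')) * (c⁻¹ * ((k:ℝ) + 1) ^ (-q)) :=
          mul_le_mul_of_nonneg_left (hdkinv k) (Real.rpow_nonneg hs0.le _)
  have hsummaj1 : Summable (fun k : ℕ => s ^ (-((p:ℝ) + ε')) * (c⁻¹ * ((k:ℝ) + 1) ^ (-q))) :=
    (hsum.mul_left _).mul_left _
  have hsumf1 : Summable (fun k : ℕ => Real.exp (-((s * d k) ^ (p + 1)))) :=
    Summable.of_nonneg_of_le (fun k => (Real.exp_pos _).le) hbound1 hsummaj1
  constructor
  · calc (∑' k : ℕ, Real.exp (-((s * d k) ^ (p + 1))))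
        ≤ ∑' k : ℕ, s ^ (-((p:ℝ) + ε')) * (c⁻¹ * ((k:ℝ) + 1) ^ (-q)) :=
          Summable.tsum_le_tsum hbound1 hsumf1 hsummaj1
    _ = s ^ (-((p:ℝ) + ε')) * (c⁻¹ * Z) := by rw [tsum_mul_left, tsum_mul_left]
    _ ≤ s ^ (-(p:ℝ) - ε) * (c⁻¹ * Z) := by
          apply mul_le_mul_of_nonneg_right _ (by positivity)
          exact Real.rpow_le_rpow_of_exponent_ge hs0 hs1 (by linarith)
    _ = (c⁻¹ * Z) * s ^ (-(p:ℝ) - ε) := by ring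
  · have hbound2 : ∀ k : ℕ, (d k ^ (p + 1))⁻¹ * (1 - Real.exp (-((s * d k) ^ (p + 1))))
        ≤ s ^ (1 - ε') * (c⁻¹ * ((k:ℝ) + 1) ^ (-q)) := by
      intro k
      have h1 : 1 - Real.exp (-((s * d k) ^ (p + 1))) ≤ (s * d k) ^ (1 - ε') :=
        expB _ (hsd k) (p + 1) _ (by linarith) (by push_cast; linarith)
      have hdp1 : (0:ℝ) < d k ^ (p + 1) := pow_pos (hd0 k) _
      calc (d k ^ (p + 1))⁻¹ * (1 - Real.exp (-((s * d k) ^ (p + 1))))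
          ≤ (d k ^ (p + 1))⁻¹ * (s * d k) ^ (1 - ε') :=
            mul_le_mul_of_nonneg_left h1 (by positivity)
      _ = s ^ (1 - ε') * (d k ^ (1 - ε') * (d k ^ (p + 1))⁻¹) := by
            rw [Real.mul_rpow hs0.le (hd0 k).le]; ring
      _ = s ^ (1 - ε') * d k ^ (-((p:ℝ) + ε')) := by
            congr 1
            rw [← Real.rpow_natCast (d k) (p + 1), ← Real.rpow_neg (hd0 k).le,
              ← Real.rpow_add (hd0 k)]
            congr 1; push_cast; ring
      _ ≤ s ^ (1 - ε') * (c⁻¹ * ((k:ℝ) + 1) ^ (-q)) :=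
            mul_le_mul_of_nonneg_left (hdkinv k) (Real.rpow_nonneg hs0.le _)
    have hsummaj2 : Summable (fun k : ℕ => s ^ (1 - ε') * (c⁻¹ * ((k:ℝ) + 1) ^ (-q))) :=
      (hsum.mul_left _).mul_left _
    have hf2 : ∀ k : ℕ, 0 ≤ (d k ^ (p + 1))⁻¹ * (1 - Real.exp (-((s * d k) ^ (p + 1)))) := by
      intro k
      have he : Real.exp (-((s * d k) ^ (p + 1))) ≤ 1 :=
        Real.exp_le_one_iff.mpr (by simp [pow_nonneg (hsd k).le])
      have := pow_pos (hd0 k) (p + 1)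
      have : (0:ℝ) ≤ (d k ^ (p + 1))⁻¹ := by positivity
      nlinarith
    have hsumf2 : Summable
        (fun k : ℕ => (d k ^ (p + 1))⁻¹ * (1 - Real.exp (-((s * d k) ^ (p + 1))))) :=
      Summable.of_nonneg_of_le hf2 hbound2 hsummaj2
    calc (∑' k : ℕ, (d k ^ (p + 1))⁻¹ * (1 - Real.exp (-((s * d k) ^ (p + 1)))))
        ≤ ∑' k : ℕ, s ^ (1 - ε') * (c⁻¹ * ((k:ℝ) + 1) ^ (-q)) :=
          Summable.tsum_le_tsum hbound2 hsumf2 hsummaj2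
    _ = s ^ (1 - ε') * (c⁻¹ * Z) := by rw [tsum_mul_left, tsum_mul_left]
    _ ≤ s ^ (1 - ε) * (c⁻¹ * Z) := by
          apply mul_le_mul_of_nonneg_right _ (by positivity)
          exact Real.rpow_le_rpow_of_exponent_ge hs0 hs1 (by linarith)
    _ = (c⁻¹ * Z) * s ^ (1 - ε) := by ring
end

section
/- Let H be a complex Hilbert space, let B ∈ B(H) be self-adjoint, let a ∈ B(H), let f : ℝ → ℂ be a Schwartz function, and let s > 0. Write f(sB) for the continuous functional calculus of B applied to the function t ↦ f(st), and similarly f'(sB) for t ↦ f'(st). Then ‖[f(sB), a] − s·f'(sB)·[B,a]‖ ≤ s²·‖𝓕(f'')‖_{L¹(ℝ)}·‖[B,[B,a]]‖ and ‖[f(sB), a] − s·[B,a]·f'(sB)‖ ≤ s²·‖𝓕(f'')‖_{L¹(ℝ)}·‖[B,[B,a]]‖. -/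
/-!
Write `U t = exp(itB)`, a norm-continuous one-parameter group of unitaries. Fourier inversion inside
the functional calculus gives `f(sB) = ∫ 𝓕f(ξ) U(2πsξ) dξ` and `f'(sB) = ∫ 2πiξ 𝓕f(ξ) U(2πsξ) dξ`,
so the two commutator estimates reduce to the single-exponential bound
`‖[U t, a] - it U(t) [B,a]‖ ≤ t² ‖[B,[B,a]]‖` (and its mirror image), weighted by `|𝓕f(ξ)|`;
since `(2πξ)² |𝓕f(ξ)| = |𝓕(f'')(ξ)|` this integrates to the claim. The single-exponential bound
comes from the mean value inequality applied to `v ↦ U(t-v) a U(v) + iv Y`, whose derivative is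
`i (Y - U(t-v) [B,a] U(v))`; with `Y = U(t) [B,a]` this is `-i U(t-v) [U(v), [B,a]]`, of norm at
most `|v| ‖[B,[B,a]]‖` by the same argument one order lower.
-/

open scoped FourierTransform

noncomputable section

open Complex MeasureTheory Set
open scoped SchwartzMap

namespace SchwartzMap

lemma integral_fourier_mul_cexp_eq (g : 𝓢(ℝ, ℂ)) (x : ℝ) :
    ∫ ξ, 𝓕 (⇑g) ξ * cexp (↑(2 * Real.pi * ξ * x) * I) = g x := by
  conv_rhs => rw [← g.continuous.fourierInv_fourier_eq g.integrable (𝓕 g).integrable]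
  rw [Real.fourierInv_eq']
  refine integral_congr_ae (.of_forall fun ξ => ?_)
  simp [mul_comm, mul_assoc]

lemma fourier_deriv_apply {E : Type*} [NormedAddCommGroup E] [NormedSpace ℂ E]
    (f : 𝓢(ℝ, E)) (ξ : ℝ) : 𝓕 (deriv ⇑f) ξ = (2 * Real.pi * I * ξ) • 𝓕 (⇑f) ξ := by
  rw [Real.fourier_deriv f.integrable f.differentiable (derivCLM ℝ E f).integrable]

lemma norm_fourier_deriv_deriv (f : 𝓢(ℝ, ℂ)) (ξ : ℝ) :
    ‖𝓕 (deriv (deriv ⇑f)) ξ‖ = (2 * Real.pi * ξ) ^ 2 * ‖𝓕 (⇑f) ξ‖ := by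
  rw [show deriv (deriv ⇑f) = deriv ⇑(derivCLM ℝ ℂ f) from rfl, fourier_deriv_apply,
    show ⇑(derivCLM ℝ ℂ f) = deriv ⇑f from rfl, fourier_deriv_apply]
  simp only [smul_eq_mul, norm_mul, norm_real, norm_I, Real.norm_eq_abs, Complex.norm_ofNat]
  rw [abs_of_pos Real.pi_pos, mul_pow, ← sq_abs ξ]
  ring

end SchwartzMap

section UnitaryFlow

variable {A : Type*} [CStarAlgebra A] {B : A}

def unitaryFlow (B : A) (t : ℝ) : A := NormedSpace.exp (t • I • B)

@[simp] lemma unitaryFlow_zero : unitaryFlow B 0 = 1 := by simp [unitaryFlow]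

lemma unitaryFlow_add (t t' : ℝ) :
    unitaryFlow B (t + t') = unitaryFlow B t * unitaryFlow B t' := by
  let +nondep : NormedAlgebra ℚ A := .restrictScalars ℚ ℂ A
  rw [unitaryFlow, add_smul,
    NormedSpace.exp_add_of_commute (((Commute.refl _).smul_left t).smul_right t')]
  rfl

lemma hasDerivAt_unitaryFlow (t : ℝ) :
    HasDerivAt (unitaryFlow B) (I • B * unitaryFlow B t) t :=
  hasDerivAt_exp_smul_const' (I • B) t

lemma continuous_unitaryFlow : Continuous (unitaryFlow B) :=
  continuous_iff_continuousAt.mpr fun t => (hasDerivAt_unitaryFlow t).continuousAt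

lemma commute_unitaryFlow (t : ℝ) : Commute B (unitaryFlow B t) :=
  (((Commute.refl B).smul_right I).smul_right t).exp_right

lemma norm_lie_unitaryFlow_sub_smul_le (x Y : A) {t K : ℝ}
    (hK : ∀ v ∈ uIcc 0 t, ‖unitaryFlow B (t - v) * ⁅B, x⁆ * unitaryFlow B v - Y‖ ≤ K) :
    ‖⁅unitaryFlow B t, x⁆ - t • I • Y‖ ≤ K * |t| := by
  have hderiv (v : ℝ) :
      HasDerivAt (fun v => unitaryFlow B (t - v) * x * unitaryFlow B v + v • I • Y)
        (I • (Y - unitaryFlow B (t - v) * ⁅B, x⁆ * unitaryFlow B v)) v := by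
    have hU := (((hasDerivAt_unitaryFlow (B := B) (t - v)).scomp v
      ((hasDerivAt_id v).const_sub t)).mul_const x).mul (hasDerivAt_unitaryFlow (B := B) v)
    refine (hU.add ((hasDerivAt_id v).smul_const (I • Y))).congr_deriv ?_
    have hc : B * unitaryFlow B (t - v) = unitaryFlow B (t - v) * B := (commute_unitaryFlow _).eq
    simp only [Function.comp_apply, one_smul, neg_one_smul, smul_mul_assoc, hc, Ring.lie_def,
      mul_sub, sub_mul, mul_assoc, smul_sub, neg_mul, mul_smul_comm]
    abel
  have hG := (convex_uIcc 0 t).norm_image_sub_le_of_norm_hasDerivWithin_le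
    (fun v _ => (hderiv v).hasDerivWithinAt)
    (fun v hv => by rw [norm_smul, norm_I, one_mul, norm_sub_rev]; exact hK v hv)
    left_mem_uIcc right_mem_uIcc
  simp only [sub_self, sub_zero, unitaryFlow_zero, one_mul, mul_one, zero_smul, add_zero,
    Real.norm_eq_abs] at hG
  rwa [← norm_neg, Ring.lie_def, neg_sub, sub_sub_eq_add_sub, add_comm]

variable (hB : IsSelfAdjoint B)
include hB

lemma unitaryFlow_mem_unitary (t : ℝ) : unitaryFlow B t ∈ unitary A := by
  let +nondep : NormedAlgebra ℚ A := .restrictScalars ℚ ℂ A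
  exact NormedSpace.exp_mem_unitary_of_mem_skewAdjoint <|
    skewAdjoint.smul_mem t (hB.smul_mem_skewAdjoint conj_I)

lemma norm_lie_unitaryFlow_le (x : A) (t : ℝ) :
    ‖⁅unitaryFlow B t, x⁆‖ ≤ |t| * ‖⁅B, x⁆‖ := by
  have h := norm_lie_unitaryFlow_sub_smul_le (t := t) x 0 fun v _ => by
    rw [sub_zero, CStarRing.norm_mul_mem_unitary _ (unitaryFlow_mem_unitary hB v),
      CStarRing.norm_mem_unitary_mul _ (unitaryFlow_mem_unitary hB (t - v))]
  rwa [smul_zero, smul_zero, sub_zero, mul_comm] at h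

lemma norm_lie_unitaryFlow_sub_smul_mul_lie_le (x : A) (t : ℝ) :
    ‖⁅unitaryFlow B t, x⁆ - t • I • (unitaryFlow B t * ⁅B, x⁆)‖ ≤ t ^ 2 * ‖⁅B, ⁅B, x⁆⁆‖ := by
  have h := norm_lie_unitaryFlow_sub_smul_le (t := t) (K := |t| * ‖⁅B, ⁅B, x⁆⁆‖) x
    (unitaryFlow B t * ⁅B, x⁆) fun v hv => by
      have hsplit : unitaryFlow B (t - v) * ⁅B, x⁆ * unitaryFlow B v - unitaryFlow B t * ⁅B, x⁆
          = -(unitaryFlow B (t - v) * ⁅unitaryFlow B v, ⁅B, x⁆⁆) := by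
        rw [← sub_add_cancel t v, unitaryFlow_add, add_sub_cancel_right]
        simp only [Ring.lie_def]
        noncomm_ring
      rw [hsplit, norm_neg, CStarRing.norm_mem_unitary_mul _ (unitaryFlow_mem_unitary hB _)]
      refine (norm_lie_unitaryFlow_le hB _ v).trans ?_
      exact mul_le_mul_of_nonneg_right (by simpa using abs_sub_left_of_mem_uIcc hv) (norm_nonneg _)
  rwa [mul_right_comm, ← sq, sq_abs] at h

lemma norm_lie_unitaryFlow_sub_smul_lie_mul_le (x : A) (t : ℝ) :
    ‖⁅unitaryFlow B t, x⁆ - t • I • (⁅B, x⁆ * unitaryFlow B t)‖ ≤ t ^ 2 * ‖⁅B, ⁅B, x⁆⁆‖ := by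
  have h := norm_lie_unitaryFlow_sub_smul_le (t := t) (K := |t| * ‖⁅B, ⁅B, x⁆⁆‖) x
    (⁅B, x⁆ * unitaryFlow B t) fun v hv => by
      have hsplit : unitaryFlow B (t - v) * ⁅B, x⁆ * unitaryFlow B v - ⁅B, x⁆ * unitaryFlow B t
          = ⁅unitaryFlow B (t - v), ⁅B, x⁆⁆ * unitaryFlow B v := by
        rw [← sub_add_cancel t v, unitaryFlow_add, add_sub_cancel_right]
        simp only [Ring.lie_def]
        noncomm_ring
      rw [hsplit, CStarRing.norm_mul_mem_unitary _ (unitaryFlow_mem_unitary hB _)]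
      refine (norm_lie_unitaryFlow_le hB _ (t - v)).trans ?_
      exact mul_le_mul_of_nonneg_right (by simpa using abs_sub_right_of_mem_uIcc hv) (norm_nonneg _)
  rwa [mul_right_comm, ← sq, sq_abs] at h

lemma cfc_cexp_re_mul_I (t : ℝ) :
    cfc (fun w : ℂ => cexp (↑(t * w.re) * I)) B = unitaryFlow B t := by
  have := hB.isStarNormal
  calc cfc (fun w : ℂ => cexp (↑(t * w.re) * I)) B
      = cfc (fun w : ℂ => NormedSpace.exp ((t * I : ℂ) • w)) B := by
        refine cfc_congr fun w hw => ?_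
        rw [← Complex.exp_eq_exp_ℂ, smul_eq_mul, hB.mem_spectrum_eq_re hw, ofReal_re]
        push_cast
        ring_nf
    _ = NormedSpace.exp ((t * I : ℂ) • B) := by
        rw [cfc_comp_smul (t * I : ℂ) (NormedSpace.exp : ℂ → ℂ) B, CFC.exp_eq_normedSpace_exp]
    _ = unitaryFlow B t := by
        rw [unitaryFlow, mul_smul]
        rfl

lemma cfc_comp_re_eq_integral (g : 𝓢(ℝ, ℂ)) (s : ℝ) :
    cfc (fun w : ℂ => g (s * w.re)) B = ∫ ξ, 𝓕 (⇑g) ξ • unitaryFlow B (2 * Real.pi * s * ξ) := by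
  have := hB.isStarNormal
  calc cfc (fun w : ℂ => g (s * w.re)) B
      = cfc (fun w : ℂ => ∫ ξ, 𝓕 (⇑g) ξ * cexp (↑(2 * Real.pi * s * ξ * w.re) * I)) B := by
        congr 1 with w
        rw [← g.integral_fourier_mul_cexp_eq]
        congr 1 with ξ
        ring_nf
    _ = ∫ ξ, cfc (fun w : ℂ => 𝓕 (⇑g) ξ * cexp (↑(2 * Real.pi * s * ξ * w.re) * I)) B := by
        refine cfc_integral _ (fun ξ => ‖𝓕 (⇑g) ξ‖) B ?_ (.of_forall fun ξ w _ => ?_)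
          (𝓕 g).integrable.norm.hasFiniteIntegral
        · have := (𝓕 g).continuous
          exact Continuous.continuousOn (by fun_prop)
        · rw [norm_mul, norm_exp_ofReal_mul_I, mul_one]
    _ = ∫ ξ, 𝓕 (⇑g) ξ • unitaryFlow B (2 * Real.pi * s * ξ) := by
        congr 1 with ξ
        rw [cfc_const_mul _ _ B, cfc_cexp_re_mul_I hB]

lemma integrable_smul_unitaryFlow {φ : ℝ → ℂ} (hφ : Integrable φ) (c : ℝ) :
    Integrable (fun ξ => φ ξ • unitaryFlow B (c * ξ)) :=
  hφ.smul_bdd ‖(1 : A)‖ (continuous_unitaryFlow.comp (continuous_const_mul c)).aestronglyMeasurable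
    (.of_forall fun ξ => by
      rw [← CStarRing.norm_mem_unitary_mul 1 (unitaryFlow_mem_unitary hB (c * ξ)), mul_one])

lemma lie_cfc_sub_smul_cfc_deriv_eq_integral (f : 𝓢(ℝ, ℂ)) (a : A) (s : ℝ) (M : A →L[ℂ] A) :
    ⁅cfc (fun w : ℂ => f (s * w.re)) B, a⁆ - s • M (cfc (fun w : ℂ => deriv f (s * w.re)) B)
      = ∫ ξ, 𝓕 (⇑f) ξ • (⁅unitaryFlow B (2 * Real.pi * s * ξ), a⁆
          - (2 * Real.pi * s * ξ) • I • M (unitaryFlow B (2 * Real.pi * s * ξ))) := by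
  set V : ℝ → A := fun ξ => unitaryFlow B (2 * Real.pi * s * ξ)
  have hV : Integrable (fun ξ => 𝓕 (⇑f) ξ • V ξ) :=
    integrable_smul_unitaryFlow hB (𝓕 f).integrable _
  have hV' : Integrable (fun ξ => 𝓕 (deriv ⇑f) ξ • V ξ) :=
    integrable_smul_unitaryFlow hB (𝓕 (SchwartzMap.derivCLM ℝ ℂ f)).integrable _
  have hP : cfc (fun w : ℂ => f (s * w.re)) B = ∫ ξ, 𝓕 (⇑f) ξ • V ξ :=
    cfc_comp_re_eq_integral hB f s
  have hQ : cfc (fun w : ℂ => deriv f (s * w.re)) B = ∫ ξ, 𝓕 (deriv ⇑f) ξ • V ξ :=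
    cfc_comp_re_eq_integral hB (SchwartzMap.derivCLM ℝ ℂ f) s
  have hlie : ⁅cfc (fun w : ℂ => f (s * w.re)) B, a⁆ = ∫ ξ, 𝓕 (⇑f) ξ • ⁅V ξ, a⁆ := by
    rw [hP, Ring.lie_def, ← integral_mul_const_of_integrable hV,
      ← integral_const_mul_of_integrable hV, ← integral_sub (hV.mul_const a) (hV.const_mul a)]
    simp only [Ring.lie_def, smul_sub, smul_mul_assoc, mul_smul_comm]
  have hlie_int : Integrable (fun ξ => 𝓕 (⇑f) ξ • ⁅V ξ, a⁆) := by
    refine ((hV.mul_const a).sub (hV.const_mul a)).congr (.of_forall fun ξ => ?_)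
    simp only [Pi.sub_apply, Ring.lie_def, smul_sub, smul_mul_assoc, mul_smul_comm]
  have hderiv : s • M (cfc (fun w : ℂ => deriv f (s * w.re)) B)
      = ∫ ξ, s • M (𝓕 (deriv ⇑f) ξ • V ξ) := by
    rw [hQ, ← M.integral_comp_comm hV', ← integral_smul]
  have hderiv_int : Integrable (fun ξ => s • M (𝓕 (deriv ⇑f) ξ • V ξ)) :=
    (M.integrable_comp hV').smul s
  have hderiv_apply (ξ : ℝ) :
      s • M (𝓕 (deriv ⇑f) ξ • V ξ) = 𝓕 (⇑f) ξ • (2 * Real.pi * s * ξ) • I • M (V ξ) := by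
    rw [M.map_smul, SchwartzMap.fourier_deriv_apply]
    simp only [← Complex.coe_smul, smul_smul]
    congr 1
    push_cast
    ring
  rw [hlie, hderiv, ← integral_sub hlie_int hderiv_int]
  simp only [hderiv_apply, smul_sub]
  rfl

lemma norm_lie_cfc_sub_smul_cfc_deriv_le (f : 𝓢(ℝ, ℂ)) (a : A) (s K : ℝ) (M : A →L[ℂ] A)
    (hM : ∀ t : ℝ, ‖⁅unitaryFlow B t, a⁆ - t • I • M (unitaryFlow B t)‖ ≤ t ^ 2 * K) :
    ‖⁅cfc (fun w : ℂ => f (s * w.re)) B, a⁆ - s • M (cfc (fun w : ℂ => deriv f (s * w.re)) B)‖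
      ≤ s ^ 2 * (∫ ξ, ‖𝓕 (deriv (deriv ⇑f)) ξ‖) * K := by
  have hdom : Integrable (fun ξ => s ^ 2 * ‖𝓕 (deriv (deriv ⇑f)) ξ‖ * K) :=
    ((𝓕 (SchwartzMap.derivCLM ℝ ℂ (SchwartzMap.derivCLM ℝ ℂ f))).integrable.norm.const_mul _
      ).mul_const K
  rw [lie_cfc_sub_smul_cfc_deriv_eq_integral hB, ← integral_const_mul, ← integral_mul_const]
  refine norm_integral_le_of_norm_le hdom (.of_forall fun ξ => ?_)
  rw [norm_smul, SchwartzMap.norm_fourier_deriv_deriv]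
  calc _ ≤ ‖𝓕 (⇑f) ξ‖ * ((2 * Real.pi * s * ξ) ^ 2 * K) :=
        mul_le_mul_of_nonneg_left (hM _) (norm_nonneg _)
    _ = s ^ 2 * ((2 * Real.pi * ξ) ^ 2 * ‖𝓕 (⇑f) ξ‖) * K := by ring

end UnitaryFlow

theorem stmt10_general {H : Type} [NormedAddCommGroup H] [InnerProductSpace ℂ H] [CompleteSpace H]
    (B a : H →L[ℂ] H) (hB : IsSelfAdjoint B) (f : SchwartzMap ℝ ℂ) (s : ℝ) :
    ‖(cfc (fun w : ℂ => f (s * w.re)) B * a - a * cfc (fun w : ℂ => f (s * w.re)) B)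
        - s • (cfc (fun w : ℂ => deriv (⇑f) (s * w.re)) B * (B * a - a * B))‖
      ≤ s ^ 2 * (∫ ξ : ℝ, ‖𝓕 (deriv (deriv ⇑f)) ξ‖) *
          ‖B * (B * a - a * B) - (B * a - a * B) * B‖ ∧
    ‖(cfc (fun w : ℂ => f (s * w.re)) B * a - a * cfc (fun w : ℂ => f (s * w.re)) B)
        - s • ((B * a - a * B) * cfc (fun w : ℂ => deriv (⇑f) (s * w.re)) B)‖
      ≤ s ^ 2 * (∫ ξ : ℝ, ‖𝓕 (deriv (deriv ⇑f)) ξ‖) *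
          ‖B * (B * a - a * B) - (B * a - a * B) * B‖ := by
  simp only [← Ring.lie_def]
  constructor
  · simpa using norm_lie_cfc_sub_smul_cfc_deriv_le hB f a s _
      ((ContinuousLinearMap.mul ℂ _).flip ⁅B, a⁆)
      (fun t => by simpa using norm_lie_unitaryFlow_sub_smul_mul_lie_le hB a t)
  · simpa using norm_lie_cfc_sub_smul_cfc_deriv_le hB f a s _ (ContinuousLinearMap.mul ℂ _ ⁅B, a⁆)
      (fun t => by simpa using norm_lie_unitaryFlow_sub_smul_lie_mul_le hB a t)

/-- For a bounded self-adjoint operator `B`, a bounded operator `a`, a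
Schwartz function `f` and `s > 0`:
`‖[f(sB), a] − s f'(sB) [B,a]‖ ≤ s² ‖𝓕(f'')‖₁ ‖[B,[B,a]]‖` and
`‖[f(sB), a] − s [B,a] f'(sB)‖ ≤ s² ‖𝓕(f'')‖₁ ‖[B,[B,a]]‖`,
where `f(sB)` denotes the continuous functional calculus of `B` applied to `t ↦ f(st)`. -/
theorem stmt10 {H : Type} [NormedAddCommGroup H] [InnerProductSpace ℂ H] [CompleteSpace H]
    (B a : H →L[ℂ] H) (hB : IsSelfAdjoint B) (f : SchwartzMap ℝ ℂ) (s : ℝ) (hs : 0 < s) :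
    ‖(cfc (fun w : ℂ => f (s * w.re)) B * a - a * cfc (fun w : ℂ => f (s * w.re)) B)
        - s • (cfc (fun w : ℂ => deriv (⇑f) (s * w.re)) B * (B * a - a * B))‖
      ≤ s ^ 2 * (∫ ξ : ℝ, ‖𝓕 (deriv (deriv ⇑f)) ξ‖) *
          ‖B * (B * a - a * B) - (B * a - a * B) * B‖ ∧
    ‖(cfc (fun w : ℂ => f (s * w.re)) B * a - a * cfc (fun w : ℂ => f (s * w.re)) B)
        - s • ((B * a - a * B) * cfc (fun w : ℂ => deriv (⇑f) (s * w.re)) B)‖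
      ≤ s ^ 2 * (∫ ξ : ℝ, ‖𝓕 (deriv (deriv ⇑f)) ξ‖) *
          ‖B * (B * a - a * B) - (B * a - a * B) * B‖ :=
  stmt10_general B a hB f s

end
end

section
/- Let C > 0 and let (μ_k)_{k≥0} be a sequence of reals with 0 ≤ μ_k ≤ C/(k+1) for all k. Then sup_{t>0} t·∑_{k=0}^∞ μ_k²/(1 + t·μ_k)² < ∞. -/
/-- If `0 ≤ μ_k ≤ C/(k+1)`, then
`sup_{t>0} t ∑_k μ_k² / (1 + t μ_k)² < ∞` (the singular-value form of the statement that
`A V` is `V`-modulated for `V ∈ L_{1,∞}` positive). -/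
theorem stmt16 (C : ℝ) (hC : 0 < C) (μ : ℕ → ℝ)
    (h0 : ∀ k, 0 ≤ μ k) (hb : ∀ k, μ k ≤ C / ((k : ℝ) + 1)) :
    ∃ M : ℝ, ∀ t : ℝ, 0 < t →
      t * (∑' k : ℕ, μ k ^ 2 / (1 + t * μ k) ^ 2) ≤ M := by
  refine ⟨C, fun t ht => ?_⟩
  set f : ℕ → ℝ := fun k => 1 / ((k : ℝ) + t * C) with hf
  have key : ∀ k : ℕ, μ k ^ 2 / (1 + t * μ k) ^ 2 ≤ C ^ 2 * (f k - f (k + 1)) := by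
    intro k
    have hμ := h0 k
    have hk1 : (0 : ℝ) < (k : ℝ) + 1 := by positivity
    have hμk1 : μ k * ((k : ℝ) + 1) ≤ C := (le_div_iff₀ hk1).mp (hb k)
    have hd : (0 : ℝ) < 1 + t * μ k := by positivity
    have ha : (0 : ℝ) < (k : ℝ) + t * C := by positivity
    have hb2 : (0 : ℝ) < (k : ℝ) + 1 + t * C := by positivity
    have step1 : μ k / (1 + t * μ k) ≤ C / ((k : ℝ) + 1 + t * C) := by
      rw [div_le_div_iff₀ hd hb2]
      nlinarith [hμk1, ht.le, hμ]
    have step2 : (μ k / (1 + t * μ k)) ^ 2 ≤ (C / ((k : ℝ) + 1 + t * C)) ^ 2 :=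
      pow_le_pow_left₀ (div_nonneg hμ hd.le) step1 2
    have step3 : (C / ((k : ℝ) + 1 + t * C)) ^ 2 ≤ C ^ 2 * (f k - f (k + 1)) := by
      have hfk : f k = 1 / ((k : ℝ) + t * C) := rfl
      have hfk1 : f (k + 1) = 1 / ((k : ℝ) + 1 + t * C) := by
        simp only [hf]
        push_cast
        ring_nf
      rw [hfk, hfk1, div_sub_div _ _ ha.ne' hb2.ne', div_pow,
        ← mul_div_assoc, div_le_div_iff₀ (by positivity) (by positivity)]
      nlinarith [sq_nonneg C, mul_le_mul_of_nonneg_right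
        (show (k : ℝ) + t * C ≤ (k : ℝ) + 1 + t * C by linarith) hb2.le, hC.le, ha.le]
    calc μ k ^ 2 / (1 + t * μ k) ^ 2 = (μ k / (1 + t * μ k)) ^ 2 := by rw [div_pow]
      _ ≤ (C / ((k : ℝ) + 1 + t * C)) ^ 2 := step2
      _ ≤ C ^ 2 * (f k - f (k + 1)) := step3
  have hpart : ∀ n, ∑ k ∈ Finset.range n, μ k ^ 2 / (1 + t * μ k) ^ 2 ≤ C / t := by
    intro n
    have htel : ∑ k ∈ Finset.range n, (f k - f (k + 1)) = f 0 - f n :=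
      Finset.sum_range_sub' f n
    have hfn : 0 ≤ f n := by
      have : (0 : ℝ) < (n : ℝ) + t * C := by positivity
      positivity
    have hf0 : f 0 = 1 / (t * C) := by simp [hf]
    calc ∑ k ∈ Finset.range n, μ k ^ 2 / (1 + t * μ k) ^ 2
        ≤ ∑ k ∈ Finset.range n, C ^ 2 * (f k - f (k + 1)) :=
          Finset.sum_le_sum fun k _ => key k
      _ = C ^ 2 * (f 0 - f n) := by rw [← Finset.mul_sum, htel]
      _ ≤ C ^ 2 * (1 / (t * C)) := by
          rw [hf0]; apply mul_le_mul_of_nonneg_left (by linarith) (sq_nonneg C)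
      _ = C / t := by field_simp
  have hsummable : Summable fun k : ℕ => μ k ^ 2 / (1 + t * μ k) ^ 2 :=
    summable_of_sum_range_le (fun k => by positivity) hpart
  have htsum : (∑' k : ℕ, μ k ^ 2 / (1 + t * μ k) ^ 2) ≤ C / t :=
    Summable.tsum_le_of_sum_range_le hsummable hpart
  calc t * (∑' k : ℕ, μ k ^ 2 / (1 + t * μ k) ^ 2) ≤ t * (C / t) := by
        apply mul_le_mul_of_nonneg_left htsum ht.le
    _ = C := by field_simp
end
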